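/- arXiv:1804.10447 — 12 statements merged into one kernel-verified Lean document; each statement's English description precedes it below -/
import Mathlib

section
/- Let Q₁=(1,1,1), Q₂=(1,0,0), Q₃=(0,1,0), Q₄=(0,0,0) in ℝ³. A point (x, y, z) belongs to the convex hull of {Q₁, Q₂, Q₃, Q₄} if and only if 0 ≤ x ≤ 1, 0 ≤ y ≤ 1, and max{x + y − 1, 0} ≤ z ≤ min{x, y}. -/
/-!
The weights `z, x - z, y - z, 1 - x - y + z` are the barycentric coordinates of `(x, y, z)` with
respect to `Q₁, …, Q₄`. Since they depend affinely on the point, the region where all four are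
nonnegative is convex and contains the vertices, hence the convex hull; conversely a point of
that region is the convex combination of the vertices with these weights. Nonnegativity of the
weights already forces `0 ≤ x, y ≤ 1`.
-/

/-- In the probabilistic reading `x = P(A)`, `y = P(B)`, `z = P(A ∧ B)`, these are the
probabilities of the atoms `A ∧ B`, `A ∧ ¬B`, `¬A ∧ B`, `¬A ∧ ¬B`. -/
def tetrahedronCoord (p : Fin 3 → ℝ) : Fin 4 → ℝ :=
  ![p 2, p 0 - p 2, p 1 - p 2, 1 - p 0 - p 1 + p 2]

def tetrahedronVertex : Fin 4 → Fin 3 → ℝ :=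
  ![![1, 1, 1], ![1, 0, 0], ![0, 1, 0], ![0, 0, 0]]

lemma sum_tetrahedronCoord (p : Fin 3 → ℝ) : ∑ i, tetrahedronCoord p i = 1 := by
  simp only [tetrahedronCoord, Fin.sum_univ_four, Fin.isValue, Matrix.cons_val_zero,
    Matrix.cons_val_one, Matrix.cons_val]
  ring

lemma sum_tetrahedronCoord_smul_vertex (p : Fin 3 → ℝ) :
    ∑ i, tetrahedronCoord p i • tetrahedronVertex i = p := by
  ext j
  fin_cases j <;> simp [tetrahedronCoord, tetrahedronVertex, Fin.sum_univ_four]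

lemma tetrahedronCoord_smul_add_smul (p q : Fin 3 → ℝ) {a b : ℝ} (hab : a + b = 1) :
    tetrahedronCoord (a • p + b • q) = a • tetrahedronCoord p + b • tetrahedronCoord q := by
  obtain rfl : b = 1 - a := by linarith
  ext i
  fin_cases i <;>
    simp only [tetrahedronCoord, Fin.isValue, Pi.add_apply, Pi.smul_apply, smul_eq_mul,
      Fin.zero_eta, Fin.mk_one, Fin.reduceFinMk, Matrix.cons_val_zero, Matrix.cons_val_one,
      Matrix.cons_val] <;>
    ring

lemma convex_setOf_tetrahedronCoord_nonneg :
    Convex ℝ {p : Fin 3 → ℝ | 0 ≤ tetrahedronCoord p} := by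
  intro p hp q hq a b ha hb hab
  rw [Set.mem_ofPred_eq, tetrahedronCoord_smul_add_smul p q hab]
  exact add_nonneg (smul_nonneg ha hp) (smul_nonneg hb hq)

lemma convexHull_range_tetrahedronVertex :
    convexHull ℝ (Set.range tetrahedronVertex) = {p | 0 ≤ tetrahedronCoord p} := by
  refine subset_antisymm (convexHull_min ?_ convex_setOf_tetrahedronCoord_nonneg) fun p hp => ?_
  · rintro _ ⟨i, rfl⟩ j
    fin_cases i <;> fin_cases j <;> simp [tetrahedronCoord, tetrahedronVertex]
  · rw [← sum_tetrahedronCoord_smul_vertex p]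
    exact (convex_convexHull ℝ _).sum_mem (fun i _ => hp i) (sum_tetrahedronCoord p)
      fun i _ => subset_convexHull ℝ _ (Set.mem_range_self i)

lemma tetrahedronCoord_nonneg_iff (x y z : ℝ) :
    0 ≤ tetrahedronCoord ![x, y, z] ↔ 0 ≤ z ∧ z ≤ x ∧ z ≤ y ∧ 0 ≤ 1 - x - y + z := by
  simp only [tetrahedronCoord, Pi.le_def, Pi.zero_apply, Fin.forall_fin_succ, Fin.isValue,
    Matrix.cons_val, Matrix.cons_val_zero, Matrix.cons_val_one, Matrix.cons_val_succ,
    Matrix.cons_val_fin_one, sub_nonneg, forall_const]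

/-- Let `Q₁=(1,1,1)`, `Q₂=(1,0,0)`, `Q₃=(0,1,0)`, `Q₄=(0,0,0)` in `ℝ³`.
A point `(x, y, z)` belongs to the convex hull of `{Q₁, Q₂, Q₃, Q₄}` if and only if
`0 ≤ x ≤ 1`, `0 ≤ y ≤ 1`, and `max {x + y − 1, 0} ≤ z ≤ min {x, y}`. -/
theorem stmt0 (x y z : ℝ) :
    (![x, y, z]) ∈ convexHull ℝ
      ({![1, 1, 1], ![1, 0, 0], ![0, 1, 0], ![0, 0, 0]} : Set (Fin 3 → ℝ)) ↔
      (0 ≤ x ∧ x ≤ 1) ∧ (0 ≤ y ∧ y ≤ 1) ∧ max (x + y - 1) 0 ≤ z ∧ z ≤ min x y := by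
  have hvertices : ({![1, 1, 1], ![1, 0, 0], ![0, 1, 0], ![0, 0, 0]} : Set (Fin 3 → ℝ)) =
      Set.range tetrahedronVertex := by
    simp only [tetrahedronVertex, Matrix.range_cons, Matrix.range_empty, Set.union_empty,
      Set.singleton_union]
  rw [hvertices, convexHull_range_tetrahedronVertex, Set.mem_ofPred_eq,
    tetrahedronCoord_nonneg_iff, max_le_iff, le_min_iff]
  constructor
  · rintro ⟨hz, hzx, hzy, hxyz⟩
    exact ⟨⟨by linarith, by linarith⟩, ⟨by linarith, by linarith⟩, ⟨by linarith, hz⟩, hzx, hzy⟩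
  · rintro ⟨-, -, ⟨hxyz, hz⟩, hzx, hzy⟩
    exact ⟨hz, hzx, hzy, by linarith⟩
end

section
/- Let z ∈ [0,1] and let Q₁=(1,1,1), Q₂=(1,0,0), Q₃=(0,1,0), Q₄=(0,0,0) in ℝ³. Then the set {(x, y) ∈ ℝ² : (x, y, z) belongs to the convex hull of {Q₁, Q₂, Q₃, Q₄}} equals the set T_z = {(x, y) : z ≤ x ≤ 1 and z ≤ y ≤ 1 + z − x}. -/
/-
The four points are affinely independent, so a point `v` of their convex hull has unique
barycentric coordinates, which can be read off from `v = ![w₀ + w₁, w₀ + w₂, w₀]`: they are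
`(v 2, v 0 - v 2, v 1 - v 2, 1 + v 2 - v 0 - v 1)`. The hull is therefore the tetrahedron cut out by
their nonnegativity, and its slice at height `z` is `T_z`.
-/

open Set

theorem convexHull_range_eq_image_stdSimplex {R E ι : Type*} [Field R] [LinearOrder R]
    [IsStrictOrderedRing R] [AddCommGroup E] [Module R E] [Fintype ι] (v : ι → E) :
    convexHull R (range v) = Fintype.linearCombination R v '' stdSimplex R ι := by
  classical
  rw [← convexHull_rangle_single_eq_stdSimplex, LinearMap.image_convexHull, ← range_comp]
  congr 2
  funext i
  simp [Fintype.linearCombination_apply_single]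

def tetraVertex : Fin 4 → Fin 3 → ℝ := ![![1, 1, 1], ![1, 0, 0], ![0, 1, 0], ![0, 0, 0]]

theorem range_tetraVertex :
    range tetraVertex = {![1, 1, 1], ![1, 0, 0], ![0, 1, 0], ![0, 0, 0]} := by
  simp only [tetraVertex, Matrix.range_cons, Matrix.range_empty, union_empty, singleton_union]

theorem linearCombination_tetraVertex (w : Fin 4 → ℝ) :
    Fintype.linearCombination ℝ tetraVertex w = ![w 0 + w 1, w 0 + w 2, w 0] := by
  ext j
  fin_cases j <;> simp [Fintype.linearCombination_apply, Fin.sum_univ_four, tetraVertex]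

theorem mem_convexHull_tetraVertex_iff (v : Fin 3 → ℝ) :
    v ∈ convexHull ℝ (range tetraVertex) ↔
      0 ≤ v 2 ∧ v 2 ≤ v 0 ∧ v 2 ≤ v 1 ∧ v 0 + v 1 ≤ 1 + v 2 := by
  rw [convexHull_range_eq_image_stdSimplex]
  constructor
  · rintro ⟨w, ⟨hw₀, hw₁⟩, rfl⟩
    rw [Fin.sum_univ_four] at hw₁
    simp only [linearCombination_tetraVertex, Matrix.cons_val, Matrix.cons_val_zero,
      Matrix.cons_val_one]
    have := hw₀ 1; have := hw₀ 2; have := hw₀ 3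
    exact ⟨hw₀ 0, by linarith, by linarith, by linarith⟩
  · rintro ⟨h₀, h₁, h₂, h₃⟩
    refine ⟨![v 2, v 0 - v 2, v 1 - v 2, 1 + v 2 - v 0 - v 1], ⟨?_, ?_⟩, ?_⟩
    · intro i
      fin_cases i <;> simp <;> linarith
    · simp only [Fin.sum_univ_four, Matrix.cons_val, Matrix.cons_val_zero, Matrix.cons_val_one]
      ring
    · rw [linearCombination_tetraVertex]
      ext j
      fin_cases j <;> simp

/-- Let `z ∈ [0,1]` and let `Q₁=(1,1,1)`, `Q₂=(1,0,0)`, `Q₃=(0,1,0)`,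
`Q₄=(0,0,0)` in `ℝ³`. Then the set of `(x, y) ∈ ℝ²` such that `(x, y, z)` belongs to the
convex hull of `{Q₁, Q₂, Q₃, Q₄}` equals
`T_z = {(x, y) : z ≤ x ≤ 1 and z ≤ y ≤ 1 + z − x}`. -/
theorem stmt2 (z : ℝ) (hz : z ∈ Set.Icc (0 : ℝ) 1) :
    {p : ℝ × ℝ | (![p.1, p.2, z]) ∈ convexHull ℝ
        ({![1, 1, 1], ![1, 0, 0], ![0, 1, 0], ![0, 0, 0]} : Set (Fin 3 → ℝ))} =
      {p : ℝ × ℝ | z ≤ p.1 ∧ p.1 ≤ 1 ∧ z ≤ p.2 ∧ p.2 ≤ 1 + z - p.1} := by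
  ext p
  simp only [mem_ofPred_eq, ← range_tetraVertex, mem_convexHull_tetraVertex_iff, Matrix.cons_val,
    Matrix.cons_val_zero, Matrix.cons_val_one]
  constructor
  · rintro ⟨-, hx, hy, hxy⟩
    exact ⟨hx, by linarith, hy, by linarith⟩
  · rintro ⟨hx, -, hy, hxy⟩
    exact ⟨hz.1, hx, hy, by linarith⟩
end

section
/- Let Q₁=(1,1,1,1,1,1,1), Q₂=(1,1,0,1,0,0,0), Q₃=(1,0,1,0,1,0,0), Q₄=(1,0,0,0,0,0,0), Q₅=(0,1,1,0,0,1,0), Q₆=(0,1,0,0,0,0,0), Q₇=(0,0,1,0,0,0,0), Q₈=(0,0,0,0,0,0,0) in ℝ⁷. A point M = (x₁, x₂, x₃, x₁₂, x₁₃, x₂₃, x₁₂₃) belongs to the convex hull of {Q₁, …, Q₈} if and only if max{0, x₁₂ + x₁₃ − x₁, x₁₂ + x₂₃ − x₂, x₁₃ + x₂₃ − x₃} ≤ x₁₂₃ and x₁₂₃ ≤ min{x₁₂, x₁₃, x₂₃, 1 − x₁ − x₂ − x₃ + x₁₂ + x₁₃ + x₂₃}. -/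
/-!
The eight points are affinely independent and span `ℝ⁷`, so a point of `ℝ⁷` has unique
barycentric coordinates with respect to them; these are the probabilities of the eight atoms,
recovered from the moments `(x₁, …, x₁₂₃)` by inclusion–exclusion. The point lies in the convex
hull exactly when all eight coordinates are nonnegative.
-/

open Set

section Barycentric

variable {𝕜 E ι : Type*} [Field 𝕜] [LinearOrder 𝕜] [IsStrictOrderedRing 𝕜]
  [AddCommGroup E] [Module 𝕜 E] [Fintype ι]

theorem convexHull_range_eq_setOf_coord_nonneg (p : ι → E) (c : E → ι → 𝕜)
    (sum_c : ∀ v, ∑ i, c v i = 1) (sum_c_smul : ∀ v, ∑ i, c v i • p i = v)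
    (c_sum_smul : ∀ w : ι → 𝕜, ∑ i, w i = 1 → c (∑ i, w i • p i) = w) :
    convexHull 𝕜 (range p) = {v | ∀ i, 0 ≤ c v i} := by
  classical
  refine (convexHull_min ?_ ?_).antisymm fun v hv ↦
    mem_convexHull_of_exists_fintype (c v) p hv (sum_c v) (mem_range_self ·) (sum_c_smul v)
  · rintro _ ⟨j, rfl⟩ i
    have hp : ∑ k, (Pi.single j 1 : ι → 𝕜) k • p k = p j := by simp [Pi.single_apply]
    rw [← hp, c_sum_smul _ (by simp)]
    exact (Pi.single_nonneg.2 zero_le_one : (0 : ι → 𝕜) ≤ Pi.single j 1) i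
  · intro u hu w hw a b ha hb hab i
    have hcomb : a • u + b • w = ∑ k, (a * c u k + b * c w k) • p k := by
      simp only [add_smul, mul_smul, Finset.sum_add_distrib, ← Finset.smul_sum, sum_c_smul]
    have hsum : ∑ k, (a * c u k + b * c w k) = 1 := by
      simp [Finset.sum_add_distrib, ← Finset.mul_sum, sum_c, hab]
    rw [hcomb, c_sum_smul _ hsum]
    exact add_nonneg (mul_nonneg ha (hu i)) (mul_nonneg hb (hw i))

end Barycentric

/-- The values of `(E₁, E₂, E₃, E₁E₂, E₁E₃, E₂E₃, E₁E₂E₃)` on the atoms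
`E₁E₂E₃, E₁E₂E₃ᶜ, E₁E₂ᶜE₃, E₁E₂ᶜE₃ᶜ, E₁ᶜE₂E₃, E₁ᶜE₂E₃ᶜ, E₁ᶜE₂ᶜE₃, E₁ᶜE₂ᶜE₃ᶜ`. -/
def atomPoint : Fin 8 → Fin 7 → ℝ :=
  ![![1, 1, 1, 1, 1, 1, 1], ![1, 1, 0, 1, 0, 0, 0], ![1, 0, 1, 0, 1, 0, 0],
    ![1, 0, 0, 0, 0, 0, 0], ![0, 1, 1, 0, 0, 1, 0], ![0, 1, 0, 0, 0, 0, 0],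
    ![0, 0, 1, 0, 0, 0, 0], ![0, 0, 0, 0, 0, 0, 0]]

/-- The probabilities of the atoms, by inclusion–exclusion from the moments `v`. -/
def atomWeight (v : Fin 7 → ℝ) : Fin 8 → ℝ :=
  ![v 6, v 3 - v 6, v 4 - v 6, v 0 - v 3 - v 4 + v 6, v 5 - v 6, v 1 - v 3 - v 5 + v 6,
    v 2 - v 4 - v 5 + v 6, 1 - v 0 - v 1 - v 2 + v 3 + v 4 + v 5 - v 6]

theorem sum_atomWeight (v : Fin 7 → ℝ) : ∑ i, atomWeight v i = 1 := by
  simp only [Fin.sum_univ_eight, atomWeight, Matrix.cons_val]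
  ring

theorem sum_atomWeight_smul_atomPoint (v : Fin 7 → ℝ) : ∑ i, atomWeight v i • atomPoint i = v := by
  ext j
  fin_cases j <;> simp [Fin.sum_univ_eight, atomWeight, atomPoint] <;> ring

theorem atomWeight_sum_smul_atomPoint (w : Fin 8 → ℝ) (hw : ∑ i, w i = 1) :
    atomWeight (∑ i, w i • atomPoint i) = w := by
  rw [Fin.sum_univ_eight] at hw
  ext j
  fin_cases j <;> simp [Fin.sum_univ_eight, atomWeight, atomPoint] <;> linarith

theorem convexHull_range_atomPoint :
    convexHull ℝ (range atomPoint) = {v | ∀ i, 0 ≤ atomWeight v i} :=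
  convexHull_range_eq_setOf_coord_nonneg atomPoint atomWeight sum_atomWeight
    sum_atomWeight_smul_atomPoint atomWeight_sum_smul_atomPoint

/-- With the eight points `Q₁, …, Q₈` of `ℝ⁷` listed below (the values of
the random vector `(E₁, E₂, E₃, E₁E₂, E₁E₃, E₂E₃, E₁E₂E₃)` on the eight atoms generated by
three events), a point `M = (x₁, x₂, x₃, x₁₂, x₁₃, x₂₃, x₁₂₃)` belongs to the convex hull
of `{Q₁, …, Q₈}` if and only if
`max {0, x₁₂ + x₁₃ − x₁, x₁₂ + x₂₃ − x₂, x₁₃ + x₂₃ − x₃} ≤ x₁₂₃` and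
`x₁₂₃ ≤ min {x₁₂, x₁₃, x₂₃, 1 − x₁ − x₂ − x₃ + x₁₂ + x₁₃ + x₂₃}`. -/
theorem stmt3 (x₁ x₂ x₃ x₁₂ x₁₃ x₂₃ x₁₂₃ : ℝ) :
    (![x₁, x₂, x₃, x₁₂, x₁₃, x₂₃, x₁₂₃]) ∈ convexHull ℝ
      ({![1, 1, 1, 1, 1, 1, 1], ![1, 1, 0, 1, 0, 0, 0], ![1, 0, 1, 0, 1, 0, 0],
        ![1, 0, 0, 0, 0, 0, 0], ![0, 1, 1, 0, 0, 1, 0], ![0, 1, 0, 0, 0, 0, 0],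
        ![0, 0, 1, 0, 0, 0, 0], ![0, 0, 0, 0, 0, 0, 0]} : Set (Fin 7 → ℝ)) ↔
      max (max (max 0 (x₁₂ + x₁₃ - x₁)) (x₁₂ + x₂₃ - x₂)) (x₁₃ + x₂₃ - x₃) ≤ x₁₂₃ ∧
        x₁₂₃ ≤ min (min (min x₁₂ x₁₃) x₂₃) (1 - x₁ - x₂ - x₃ + x₁₂ + x₁₃ + x₂₃) := by
  have hrange : range atomPoint = ({![1, 1, 1, 1, 1, 1, 1], ![1, 1, 0, 1, 0, 0, 0],
      ![1, 0, 1, 0, 1, 0, 0], ![1, 0, 0, 0, 0, 0, 0], ![0, 1, 1, 0, 0, 1, 0],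
      ![0, 1, 0, 0, 0, 0, 0], ![0, 0, 1, 0, 0, 0, 0], ![0, 0, 0, 0, 0, 0, 0]} : Set (Fin 7 → ℝ)) := by
    simp only [atomPoint, Matrix.range_cons, Matrix.range_empty, union_empty, singleton_union]
  rw [← hrange, convexHull_range_atomPoint, mem_ofPred_eq]
  simp only [atomWeight, Fin.forall_fin_succ, Matrix.cons_val_zero, Matrix.cons_val_succ,
    Matrix.cons_val_fin_one, Matrix.cons_val, forall_const, sub_nonneg, max_le_iff, le_min_iff]
  constructor <;> intro h <;> (repeat' constructor) <;> linarith [h]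
end

section
/- With the recursive definition of the conjunctions 𝒞_S and previsions x_S below, for every n ≥ 1 the prevision μₙ := x_{{1,…,n}} of the conjunction 𝒞ₙ satisfies the Fréchet–Hoeffding bounds: max{x_{{1}} + ⋯ + x_{{n}} − (n − 1), 0} ≤ μₙ ≤ min{x_{{1}}, …, x_{{n}}}, where x_{{i}} = P(Eᵢ|Hᵢ). -/
open MeasureTheory

/-- The recursive system defining the conjunction `𝒞_S` of the conditional events
`Eᵢ|Hᵢ, i ∈ S`, together with its prevision `x_S`, for every nonempty `S ⊆ {1,…,n}`:
for `ω ∈ ⋃_{i∈S} Hᵢ` let `T(ω) := {i ∈ S : ω ∉ Hᵢ}`; then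
`𝒞_S(ω) = 0` if `ω ∈ Hᵢ∖Eᵢ` for some `i ∈ S`;
`𝒞_S(ω) = 1` if `ω ∈ Eᵢ∩Hᵢ` for every `i ∈ S`;
`𝒞_S(ω) = x_{T(ω)}` if `ω ∈ Eᵢ∩Hᵢ` for every `i ∈ S∖T(ω)` and `∅ ≠ T(ω) ⊊ S`;
`x_S = E[𝒞_S·1_{⋃_{i∈S}Hᵢ}]/P(⋃_{i∈S}Hᵢ)`; and `𝒞_S(ω) = x_S` for `ω ∈ ⋂_{i∈S} Hᵢᶜ`. -/
structure ConjunctionSystem {Ω : Type*} [MeasurableSpace Ω] (P : Measure Ω)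
    {n : ℕ} (E H : Fin n → Set Ω) (C : Finset (Fin n) → Ω → ℝ)
    (x : Finset (Fin n) → ℝ) : Prop where
  eq_zero : ∀ S : Finset (Fin n), S.Nonempty → ∀ ω : Ω,
    (∃ i ∈ S, ω ∈ H i ∧ ω ∉ E i) → C S ω = 0
  eq_one : ∀ S : Finset (Fin n), S.Nonempty → ∀ ω : Ω,
    (∀ i ∈ S, ω ∈ E i ∩ H i) → C S ω = 1
  eq_part : ∀ S : Finset (Fin n), S.Nonempty → ∀ ω : Ω, ∀ T : Finset (Fin n),
    T ⊆ S → T.Nonempty → T ≠ S → (∀ i ∈ S, (i ∈ T ↔ ω ∉ H i)) →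
    (∀ i ∈ S, i ∉ T → ω ∈ E i ∩ H i) → C S ω = x T
  prevision : ∀ S : Finset (Fin n), S.Nonempty →
    x S = (∫ ω in ⋃ i ∈ S, H i, C S ω ∂P) / (P (⋃ i ∈ S, H i)).toReal
  eq_off : ∀ S : Finset (Fin n), S.Nonempty → ∀ ω : Ω,
    (∀ i ∈ S, ω ∉ H i) → C S ω = x S

namespace Stmt7Aux
set_option linter.unusedSectionVars false

variable {Ω : Type*} [MeasurableSpace Ω] {P : Measure Ω} [IsProbabilityMeasure P]
  {n : ℕ} {E H : Fin n → Set Ω}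
  {C : Finset (Fin n) → Ω → ℝ} {x : Finset (Fin n) → ℝ}

lemma singleton_form (hsys : ConjunctionSystem P E H C x) (j : Fin n) (ω : Ω) :
    C {j} ω = (E j ∩ H j).indicator (fun _ => (1 : ℝ)) ω
      + ((H j)ᶜ).indicator (fun _ => x {j}) ω := by
  by_cases hHj : ω ∈ H j
  · by_cases hEj : ω ∈ E j
    · rw [hsys.eq_one {j} (Finset.singleton_nonempty j) ω
        (fun i hi => by rw [Finset.mem_singleton] at hi; subst hi; exact ⟨hEj, hHj⟩)]
      simp [Set.indicator_apply, hHj, hEj]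
    · rw [hsys.eq_zero {j} (Finset.singleton_nonempty j) ω
        ⟨j, Finset.mem_singleton_self j, hHj, hEj⟩]
      simp [Set.indicator_apply, hHj, hEj]
  · rw [hsys.eq_off {j} (Finset.singleton_nonempty j) ω
      (fun i hi => by rw [Finset.mem_singleton] at hi; subst hi; exact hHj)]
    simp [Set.indicator_apply, hHj]

lemma singleton_integrable (hE : ∀ i, MeasurableSet (E i)) (hH : ∀ i, MeasurableSet (H i))
    (hsys : ConjunctionSystem P E H C x) (j : Fin n) :
    Integrable (fun ω => C {j} ω) P := by
  have : (fun ω => C {j} ω) = fun ω => (E j ∩ H j).indicator (fun _ => (1 : ℝ)) ω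
      + ((H j)ᶜ).indicator (fun _ => x {j}) ω := funext (singleton_form hsys j)
  rw [this]
  exact ((integrable_const (1:ℝ)).indicator ((hE j).inter (hH j))).add
    ((integrable_const (x {j})).indicator (hH j).compl)

lemma singleton_key (hE : ∀ i, MeasurableSet (E i)) (hH : ∀ i, MeasurableSet (H i))
    (hsys : ConjunctionSystem P E H C x) (j : Fin n) {V : Set Ω} (hV : MeasurableSet V) :
    ∫ ω in V, C {j} ω ∂P
      = (P (V ∩ (E j ∩ H j))).toReal + x {j} * (P (V ∩ (H j)ᶜ)).toReal := by
  rw [setIntegral_congr_fun hV (fun ω _ => singleton_form hsys j ω)]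
  rw [integral_add (((integrable_const (1:ℝ)).indicator ((hE j).inter (hH j))).integrableOn)
      (((integrable_const (x {j})).indicator (hH j).compl).integrableOn),
    setIntegral_indicator ((hE j).inter (hH j)), setIntegral_indicator (hH j).compl,
    setIntegral_const, setIntegral_const]
  simp [smul_eq_mul]
  rw [measureReal_def, measureReal_def]
  ring

lemma singleton_x_eq (hE : ∀ i, MeasurableSet (E i)) (hH : ∀ i, MeasurableSet (H i))
    (hsys : ConjunctionSystem P E H C x) (j : Fin n) :
    x {j} = (P (E j ∩ H j)).toReal / (P (H j)).toReal := by
  have hp := hsys.prevision {j} (Finset.singleton_nonempty j)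
  rw [Finset.set_biUnion_singleton] at hp
  rw [singleton_key hE hH hsys j (hH j)] at hp
  rw [Set.inter_eq_right.mpr Set.inter_subset_right, Set.inter_compl_self] at hp
  simpa using hp

lemma singleton_bounds (hE : ∀ i, MeasurableSet (E i)) (hH : ∀ i, MeasurableSet (H i))
    (hHpos : ∀ i, 0 < P (H i)) (hsys : ConjunctionSystem P E H C x) (j : Fin n) :
    0 ≤ x {j} ∧ x {j} ≤ 1 := by
  rw [singleton_x_eq hE hH hsys j]
  have hpos : 0 < (P (H j)).toReal :=
    ENNReal.toReal_pos (hHpos j).ne' (measure_ne_top _ _)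
  constructor
  · exact div_nonneg ENNReal.toReal_nonneg hpos.le
  · rw [div_le_one hpos]
    exact ENNReal.toReal_le_toReal (measure_ne_top _ _) (measure_ne_top _ _) |>.mpr
      (measure_mono Set.inter_subset_right)

lemma singleton_setIntegral (hE : ∀ i, MeasurableSet (E i)) (hH : ∀ i, MeasurableSet (H i))
    (hHpos : ∀ i, 0 < P (H i)) (hsys : ConjunctionSystem P E H C x) (j : Fin n)
    {U : Set Ω} (hU : MeasurableSet U) (hsub : H j ⊆ U) :
    ∫ ω in U, C {j} ω ∂P = x {j} * (P U).toReal := by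
  have hXj : x {j} * (P (H j)).toReal = (P (E j ∩ H j)).toReal := by
    rw [singleton_x_eq hE hH hsys j]
    have hpos : 0 < (P (H j)).toReal :=
      ENNReal.toReal_pos (hHpos j).ne' (measure_ne_top _ _)
    field_simp
  rw [singleton_key hE hH hsys j hU]
  rw [Set.inter_eq_right.mpr (Set.inter_subset_right.trans hsub), ← Set.diff_eq]
  have h3 : (P U).toReal = (P (H j)).toReal + (P (U \ H j)).toReal := by
    have h := measure_inter_add_diff (μ := P) U (hH j)
    rw [Set.inter_eq_right.mpr hsub] at h
    rw [← h, ENNReal.toReal_add (measure_ne_top _ _) (measure_ne_top _ _)]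
  rw [h3, mul_add, hXj]

lemma singleton_mem_Icc (hE : ∀ i, MeasurableSet (E i)) (hH : ∀ i, MeasurableSet (H i))
    (hHpos : ∀ i, 0 < P (H i)) (hsys : ConjunctionSystem P E H C x) (j : Fin n) (ω : Ω) :
    0 ≤ C {j} ω ∧ C {j} ω ≤ 1 := by
  by_cases hHj : ω ∈ H j
  · by_cases hEj : ω ∈ E j
    · rw [hsys.eq_one {j} (Finset.singleton_nonempty j) ω
        (fun i hi => by rw [Finset.mem_singleton] at hi; subst hi; exact ⟨hEj, hHj⟩)]
      exact ⟨zero_le_one, le_rfl⟩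
    · rw [hsys.eq_zero {j} (Finset.singleton_nonempty j) ω
        ⟨j, Finset.mem_singleton_self j, hHj, hEj⟩]
      exact ⟨le_rfl, zero_le_one⟩
  · rw [hsys.eq_off {j} (Finset.singleton_nonempty j) ω
      (fun i hi => by rw [Finset.mem_singleton] at hi; subst hi; exact hHj)]
    exact singleton_bounds hE hH hHpos hsys j

lemma cases_on_U (hsys : ConjunctionSystem P E H C x) {S : Finset (Fin n)} (hS : S.Nonempty)
    {ω : Ω} (hω : ω ∈ ⋃ i ∈ S, H i) :
    (C S ω = 0 ∧ ∃ i ∈ S, ω ∈ H i ∧ ω ∉ E i) ∨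
    (C S ω = 1 ∧ ∀ i ∈ S, ω ∈ E i ∩ H i) ∨
    (∃ T : Finset (Fin n), T ⊆ S ∧ T.Nonempty ∧ T ≠ S ∧ C S ω = x T ∧
      (∀ i ∈ S, (i ∈ T ↔ ω ∉ H i)) ∧ (∀ i ∈ S, i ∉ T → ω ∈ E i ∩ H i)) := by
  classical
  by_cases hz : ∃ i ∈ S, ω ∈ H i ∧ ω ∉ E i
  · exact Or.inl ⟨hsys.eq_zero S hS ω hz, hz⟩
  · push_neg at hz
    set T := S.filter (fun i => ω ∉ H i) with hT
    have hmem : ∀ i ∈ S, (i ∈ T ↔ ω ∉ H i) := fun i hi => by simp [hT, hi]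
    have hEH : ∀ i ∈ S, i ∉ T → ω ∈ E i ∩ H i := by
      intro i hi hiT
      have hHi : ω ∈ H i := by by_contra h; exact hiT ((hmem i hi).mpr h)
      exact ⟨hz i hi hHi, hHi⟩
    obtain ⟨i₀, hi₀S, hi₀H⟩ : ∃ i ∈ S, ω ∈ H i := by simpa using hω
    have hTne : T ≠ S := fun h =>
      ((hmem i₀ hi₀S).mp (by rw [h]; exact hi₀S)) hi₀H
    rcases T.eq_empty_or_nonempty with hTe | hTnem
    · refine Or.inr (Or.inl ⟨hsys.eq_one S hS ω ?_, ?_⟩) <;>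
        exact fun i hi => hEH i hi (by simp [hTe])
    · exact Or.inr (Or.inr ⟨T, Finset.filter_subset _ _, hTnem, hTne,
        hsys.eq_part S hS ω T (Finset.filter_subset _ _) hTnem hTne hmem hEH, hmem, hEH⟩)


noncomputable def g (E H : Fin n → Set Ω) (x : Finset (Fin n) → ℝ)
    (S : Finset (Fin n)) : Ω → ℝ :=
  fun ω => ∑ T ∈ S.powerset.erase S,
    ((⋂ i ∈ (S \ T), (E i ∩ H i)) ∩ ⋂ i ∈ T, (H i)ᶜ).indicator
      (fun _ => if T = ∅ then 1 else x T) ω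

lemma g_integrable (hE : ∀ i, MeasurableSet (E i)) (hH : ∀ i, MeasurableSet (H i))
    (x : Finset (Fin n) → ℝ) (S : Finset (Fin n)) :
    Integrable (g E H x S) P :=
  integrable_finset_sum _ (fun T _ => (integrable_const _).indicator
    (((S \ T).measurableSet_biInter (fun i _ => (hE i).inter (hH i))).inter
      (T.measurableSet_biInter (fun i _ => (hH i).compl))))

lemma C_eq_g (hsys : ConjunctionSystem P E H C x) {S : Finset (Fin n)} (hS : S.Nonempty)
    {ω : Ω} (hω : ω ∈ ⋃ i ∈ S, H i) :
    C S ω = g E H x S ω := by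
  classical
  -- uniqueness of the matching T
  have huniq : ∀ T ∈ S.powerset.erase S, ∀ T' ∈ S.powerset.erase S, T ≠ T' →
      ω ∈ ((⋂ i ∈ (S \ T), (E i ∩ H i)) ∩ ⋂ i ∈ T, (H i)ᶜ) →
      ω ∉ ((⋂ i ∈ (S \ T'), (E i ∩ H i)) ∩ ⋂ i ∈ T', (H i)ᶜ) := by
    intro T hT T' hT' hne hmem hmem'
    apply hne
    have hTS : T ⊆ S := Finset.mem_powerset.mp (Finset.mem_erase.mp hT).2
    have hT'S : T' ⊆ S := Finset.mem_powerset.mp (Finset.mem_erase.mp hT').2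
    ext i
    constructor
    · intro hi
      have hnH : ω ∉ H i := Set.mem_iInter₂.mp hmem.2 i hi
      by_contra hi'
      have : i ∈ S \ T' := Finset.mem_sdiff.mpr ⟨hTS hi, hi'⟩
      exact hnH (Set.mem_iInter₂.mp hmem'.1 i this).2
    · intro hi
      have hnH : ω ∉ H i := Set.mem_iInter₂.mp hmem'.2 i hi
      by_contra hi'
      have : i ∈ S \ T := Finset.mem_sdiff.mpr ⟨hT'S hi, hi'⟩
      exact hnH (Set.mem_iInter₂.mp hmem.1 i this).2
  rcases cases_on_U hsys hS hω with ⟨h0, i₀, hi₀S, hi₀H, hi₀E⟩ | ⟨h1, hall⟩ |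
      ⟨T, hTS, hTne, hTneS, hCx, hiff, hEH⟩
  · rw [h0, g]
    refine (Finset.sum_eq_zero ?_).symm
    intro T hT
    have hTS : T ⊆ S := Finset.mem_powerset.mp (Finset.mem_erase.mp hT).2
    apply Set.indicator_of_notMem
    intro hmem
    by_cases hiT : i₀ ∈ T
    · exact (Set.mem_iInter₂.mp hmem.2 i₀ hiT) hi₀H
    · exact hi₀E (Set.mem_iInter₂.mp hmem.1 i₀ (Finset.mem_sdiff.mpr ⟨hi₀S, hiT⟩)).1
  · rw [h1, g]
    have hmem0 : ω ∈ ((⋂ i ∈ (S \ (∅ : Finset (Fin n))), (E i ∩ H i)) ∩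
        ⋂ i ∈ (∅ : Finset (Fin n)), (H i)ᶜ) := by
      constructor
      · exact Set.mem_iInter₂.mpr (fun i hi => hall i (by simpa using hi))
      · exact Set.mem_iInter₂.mpr (fun i hi => absurd hi (by simp))
    have hemp : (∅ : Finset (Fin n)) ∈ S.powerset.erase S :=
      Finset.mem_erase.mpr ⟨(hS.ne_empty).symm, Finset.empty_mem_powerset S⟩
    rw [Finset.sum_eq_single_of_mem ∅ hemp
      (fun b hb hbne => Set.indicator_of_notMem (huniq ∅ hemp b hb (Ne.symm hbne) hmem0) _)]
    rw [Set.indicator_of_mem hmem0]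
    simp
  · rw [hCx, g]
    have hmemT : ω ∈ ((⋂ i ∈ (S \ T), (E i ∩ H i)) ∩ ⋂ i ∈ T, (H i)ᶜ) := by
      constructor
      · exact Set.mem_iInter₂.mpr (fun i hi => by
          have := Finset.mem_sdiff.mp hi
          exact hEH i this.1 this.2)
      · exact Set.mem_iInter₂.mpr (fun i hi => (hiff i (hTS hi)).mp hi)
    have hTmem : T ∈ S.powerset.erase S :=
      Finset.mem_erase.mpr ⟨hTneS, Finset.mem_powerset.mpr hTS⟩
    rw [Finset.sum_eq_single_of_mem T hTmem
      (fun b hb hbne => Set.indicator_of_notMem (huniq T hTmem b hb (Ne.symm hbne) hmemT) _)]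
    rw [Set.indicator_of_mem hmemT]
    simp [hTne.ne_empty]


lemma main (hE : ∀ i, MeasurableSet (E i)) (hH : ∀ i, MeasurableSet (H i))
    (hHpos : ∀ i, 0 < P (H i)) (hsys : ConjunctionSystem P E H C x) :
    ∀ S : Finset (Fin n), S.Nonempty →
      0 ≤ x S ∧ x S ≤ 1 ∧ (∀ j ∈ S, x S ≤ x {j}) ∧
      ((∑ i ∈ S, x {i}) - ((S.card : ℝ) - 1) ≤ x S) := by
  intro S
  induction S using Finset.strongInduction with
  | _ S IH =>
  intro hS
  obtain ⟨j₀, hj₀⟩ := hS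
  set U := ⋃ i ∈ S, H i with hUdef
  have hU : MeasurableSet U := S.measurableSet_biUnion (fun i _ => hH i)
  have hHsubU : ∀ i ∈ S, H i ⊆ U :=
    fun i hi ω hω => Set.mem_iUnion₂.mpr ⟨i, hi, hω⟩
  have hPU_pos : 0 < (P U).toReal := by
    have h1 : 0 < P U := lt_of_lt_of_le (hHpos j₀) (measure_mono (hHsubU j₀ hj₀))
    exact ENNReal.toReal_pos h1.ne' (measure_ne_top P U)
  have hxS : x S = (∫ ω in U, C S ω ∂P) / (P U).toReal := hsys.prevision S ⟨j₀, hj₀⟩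
  have hCg : ∀ ω ∈ U, C S ω = g E H x S ω := fun ω hω => C_eq_g hsys ⟨j₀, hj₀⟩ hω
  have hIg : ∫ ω in U, C S ω ∂P = ∫ ω in U, g E H x S ω ∂P :=
    setIntegral_congr_fun hU hCg
  have hgInt : IntegrableOn (g E H x S) U P := (g_integrable hE hH x S).integrableOn
  have hssub : ∀ T : Finset (Fin n), T ⊆ S → T ≠ S → T ⊂ S :=
    fun T h1 h2 => Finset.ssubset_iff_subset_ne.mpr ⟨h1, h2⟩
  have hbound : ∀ ω ∈ U, 0 ≤ C S ω ∧ C S ω ≤ 1 := by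
    intro ω hω
    rcases cases_on_U hsys ⟨j₀, hj₀⟩ hω with ⟨h0, _⟩ | ⟨h1, _⟩ |
        ⟨T, hTS, hTne, hTneS, hCx, _, _⟩
    · rw [h0]; exact ⟨le_refl 0, zero_le_one⟩
    · rw [h1]; exact ⟨zero_le_one, le_refl 1⟩
    · rw [hCx]
      have := IH T (hssub T hTS hTneS) hTne
      exact ⟨this.1, this.2.1⟩
  have hint_nonneg : 0 ≤ ∫ ω in U, C S ω ∂P := by
    rw [hIg]
    exact setIntegral_nonneg hU (fun ω hω => by
      rw [← hCg ω hω]; exact (hbound ω hω).1)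
  have hint_le : ∫ ω in U, C S ω ∂P ≤ (P U).toReal := by
    rw [hIg]
    calc ∫ ω in U, g E H x S ω ∂P ≤ ∫ _ω in U, (1 : ℝ) ∂P :=
          setIntegral_mono_on hgInt
            ((integrableOn_const_iff).mpr (Or.inr (measure_lt_top P U))) hU
            (fun ω hω => by rw [← hCg ω hω]; exact (hbound ω hω).2)
      _ = (P U).toReal := by rw [setIntegral_const]; simp; rfl
  have hb0 : 0 ≤ x S := by
    rw [hxS]; exact div_nonneg hint_nonneg hPU_pos.le
  have hb1 : x S ≤ 1 := by
    rw [hxS]; exact (div_le_one hPU_pos).mpr hint_le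
  have hupper : ∀ j ∈ S, x S ≤ x {j} := by
    intro j hj
    have hCjInt : IntegrableOn (fun ω => C {j} ω) U P :=
      (singleton_integrable hE hH hsys j).integrableOn
    have hmono : ∀ ω ∈ U, C S ω ≤ C {j} ω := by
      intro ω hω
      rcases cases_on_U hsys ⟨j₀, hj₀⟩ hω with ⟨h0, _⟩ | ⟨h1, hall⟩ |
          ⟨T, hTS, hTne, hTneS, hCx, hiff, hEH⟩
      · rw [h0]; exact (singleton_mem_Icc hE hH hHpos hsys j ω).1
      · rw [h1, hsys.eq_one {j} (Finset.singleton_nonempty j) ω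
          (fun i hi => by rw [Finset.mem_singleton.mp hi]; exact hall j hj)]
      · rw [hCx]
        by_cases hjT : j ∈ T
        · rw [hsys.eq_off {j} (Finset.singleton_nonempty j) ω
            (fun i hi => by
              rw [Finset.mem_singleton.mp hi]; exact (hiff j hj).mp hjT)]
          exact (IH T (hssub T hTS hTneS) hTne).2.2.1 j hjT
        · rw [hsys.eq_one {j} (Finset.singleton_nonempty j) ω
            (fun i hi => by
              rw [Finset.mem_singleton.mp hi]; exact hEH j hj hjT)]
          exact (IH T (hssub T hTS hTneS) hTne).2.1
    have hle : ∫ ω in U, C S ω ∂P ≤ ∫ ω in U, C {j} ω ∂P := by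
      rw [hIg]
      exact setIntegral_mono_on hgInt hCjInt hU
        (fun ω hω => by rw [← hCg ω hω]; exact hmono ω hω)
    rw [hxS, div_le_iff₀ hPU_pos]
    calc ∫ ω in U, C S ω ∂P ≤ ∫ ω in U, C {j} ω ∂P := hle
      _ = x {j} * (P U).toReal :=
          singleton_setIntegral hE hH hHpos hsys j hU (hHsubU j hj)
  refine ⟨hb0, hb1, hupper, ?_⟩
  -- lower (Fréchet) bound
  have hsb : ∀ i (ω : Ω), 0 ≤ C {i} ω ∧ C {i} ω ≤ 1 :=
    fun i ω => singleton_mem_Icc hE hH hHpos hsys i ω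
  have hmono : ∀ ω ∈ U, (∑ i ∈ S, C {i} ω) - ((S.card : ℝ) - 1) ≤ C S ω := by
    intro ω hω
    rcases cases_on_U hsys ⟨j₀, hj₀⟩ hω with ⟨h0, i₀, hi₀S, hi₀H, hi₀E⟩ | ⟨h1, _⟩ |
        ⟨T, hTS, hTne, hTneS, hCx, hiff, hEH⟩
    · rw [h0]
      have hC0 : C {i₀} ω = 0 := hsys.eq_zero {i₀} (Finset.singleton_nonempty i₀) ω
        ⟨i₀, Finset.mem_singleton_self i₀, hi₀H, hi₀E⟩
      have hsum : ∑ i ∈ S, C {i} ω ≤ (S.card : ℝ) - 1 := by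
        rw [← Finset.sum_erase_add S _ hi₀S, hC0, add_zero]
        have hle := Finset.sum_le_card_nsmul (S.erase i₀) (fun i => C {i} ω) 1
          (fun i _ => (hsb i ω).2)
        rw [nsmul_eq_mul, mul_one] at hle
        have hcard : ((S.erase i₀).card : ℝ) = (S.card : ℝ) - 1 := by
          rw [Finset.card_erase_of_mem hi₀S]
          have : 1 ≤ S.card := Finset.card_pos.mpr ⟨i₀, hi₀S⟩
          push_cast [Nat.cast_sub this]
          ring
        linarith
      linarith
    · rw [h1]
      have hsum : ∑ i ∈ S, C {i} ω ≤ (S.card : ℝ) := by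
        have hle := Finset.sum_le_card_nsmul S (fun i => C {i} ω) 1
          (fun i _ => (hsb i ω).2)
        rw [nsmul_eq_mul, mul_one] at hle
        exact hle
      linarith
    · rw [hCx]
      have hsplit : ∑ i ∈ S, C {i} ω
          = (∑ i ∈ S \ T, C {i} ω) + ∑ i ∈ T, C {i} ω :=
        (Finset.sum_sdiff hTS).symm
      have h1 : ∑ i ∈ S \ T, C {i} ω = ((S \ T).card : ℝ) := by
        rw [Finset.sum_congr rfl (fun i hi => by
          obtain ⟨hiS, hiT⟩ := Finset.mem_sdiff.mp hi
          exact hsys.eq_one {i} (Finset.singleton_nonempty i) ω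
            (fun k hk => by rw [Finset.mem_singleton.mp hk]; exact hEH i hiS hiT))]
        simp
      have h2 : ∑ i ∈ T, C {i} ω = ∑ i ∈ T, x {i} :=
        Finset.sum_congr rfl (fun i hi =>
          hsys.eq_off {i} (Finset.singleton_nonempty i) ω
            (fun k hk => by
              rw [Finset.mem_singleton.mp hk]
              exact (hiff i (hTS hi)).mp hi))
      have hcard : ((S \ T).card : ℝ) = (S.card : ℝ) - (T.card : ℝ) := by
        rw [Finset.card_sdiff_of_subset hTS]
        push_cast [Nat.cast_sub (Finset.card_le_card hTS)]
        ring
      have hIHT := (IH T (hssub T hTS hTneS) hTne).2.2.2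
      rw [hsplit, h1, h2, hcard]
      linarith
  have hfInt : IntegrableOn (fun ω => (∑ i ∈ S, C {i} ω) - ((S.card : ℝ) - 1)) U P :=
    ((integrable_finset_sum S (fun i _ => singleton_integrable hE hH hsys i)).sub
      (integrable_const _)).integrableOn
  have hIeq : ∫ ω in U, ((∑ i ∈ S, C {i} ω) - ((S.card : ℝ) - 1)) ∂P
      = (∑ i ∈ S, x {i}) * (P U).toReal - ((S.card : ℝ) - 1) * (P U).toReal := by
    rw [integral_sub
      ((integrable_finset_sum S (fun i _ => singleton_integrable hE hH hsys i)).integrableOn)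
      ((integrable_const _).integrableOn)]
    rw [integral_finset_sum S (fun i _ => (singleton_integrable hE hH hsys i).integrableOn)]
    rw [setIntegral_const, smul_eq_mul, mul_comm]
    congr 1
    rw [Finset.sum_mul]
    exact Finset.sum_congr rfl (fun i hi =>
      singleton_setIntegral hE hH hHpos hsys i hU (hHsubU i hi))
  have hle : ∫ ω in U, ((∑ i ∈ S, C {i} ω) - ((S.card : ℝ) - 1)) ∂P
      ≤ ∫ ω in U, C S ω ∂P := by
    rw [hIg]
    exact setIntegral_mono_on hfInt hgInt hU
      (fun ω hω => by rw [← hCg ω hω]; exact hmono ω hω)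
  rw [hxS, le_div_iff₀ hPU_pos]
  calc ((∑ i ∈ S, x {i}) - ((S.card : ℝ) - 1)) * (P U).toReal
      = ∫ ω in U, ((∑ i ∈ S, C {i} ω) - ((S.card : ℝ) - 1)) ∂P := by rw [hIeq]; ring
    _ ≤ ∫ ω in U, C S ω ∂P := hle

end Stmt7Aux

/-- For every `n ≥ 1`, the prevision `μₙ := x_{{1,…,n}}` of the conjunction
`𝒞ₙ` satisfies the Fréchet–Hoeffding bounds:
`max {x_{{1}} + ⋯ + x_{{n}} − (n − 1), 0} ≤ μₙ ≤ min {x_{{1}}, …, x_{{n}}}`. -/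
theorem stmt7 {Ω : Type*} [MeasurableSpace Ω] (P : Measure Ω) [IsProbabilityMeasure P]
    (n : ℕ) (hn : 1 ≤ n) (E H : Fin n → Set Ω)
    (hE : ∀ i, MeasurableSet (E i)) (hH : ∀ i, MeasurableSet (H i))
    (hHpos : ∀ i, 0 < P (H i))
    (C : Finset (Fin n) → Ω → ℝ) (x : Finset (Fin n) → ℝ)
    (hsys : ConjunctionSystem P E H C x) :
    max (∑ i, x {i} - ((n : ℝ) - 1)) 0 ≤ x Finset.univ ∧
      x Finset.univ ≤
        Finset.univ.inf' (Finset.univ_nonempty_iff.mpr (Fin.pos_iff_nonempty.mp hn))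
          (fun i => x {i}) := by
  obtain ⟨h0, h1, hup, hlow⟩ := Stmt7Aux.main hE hH hHpos hsys Finset.univ
    (Finset.univ_nonempty_iff.mpr (Fin.pos_iff_nonempty.mp hn))
  constructor
  · apply max_le _ h0
    simpa [Finset.card_univ] using hlow
  · exact Finset.le_inf' _ _ (fun j _ => hup j (Finset.mem_univ j))
end

section
/- With the recursive definition of the disjunctions 𝒟_S and previsions y_S below, for every n ≥ 1 the prevision ηₙ := y_{{1,…,n}} of the disjunction 𝒟ₙ satisfies: max{P(E₁|H₁), …, P(Eₙ|Hₙ)} ≤ ηₙ ≤ min{P(E₁|H₁) + ⋯ + P(Eₙ|Hₙ), 1}, where y_{{i}} = P(Eᵢ|Hᵢ) = P(Eᵢ∩Hᵢ)/P(Hᵢ). -/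
/-!
Strong induction on `S`. Conditioning on `U = ⋃_{i∈S} Hᵢ`, the prevision `y_S` is the
expectation of `𝒟_S`, and `P(Eᵢ|Hᵢ)` is the expectation of the conditional event `Eᵢ|Hᵢ`
for every `i ∈ S`. On `U` the bounds hold pointwise, with the values of the `Eᵢ|Hᵢ` in
place of the `P(Eᵢ|Hᵢ)`: where some `Eᵢ ∩ Hᵢ` occurs, `𝒟_S` and the largest of these values
are `1`; otherwise `𝒟_S = y_T` for the set `T ⊊ S` of failed conditions, while `Eᵢ|Hᵢ`
equals `P(Eᵢ|Hᵢ)` for `i ∈ T` and `0` for `i ∉ T`, so this is the induction hypothesis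
for `T`. Integrating preserves the bounds.
-/

open MeasureTheory

/-- The recursive system defining the disjunction `𝒟_S` of the conditional events
`Eᵢ|Hᵢ, i ∈ S`, together with its prevision `y_S`, for every nonempty `S ⊆ {1,…,n}`:
for `ω ∈ ⋃_{i∈S} Hᵢ` let `T(ω) := {i ∈ S : ω ∉ Hᵢ}`; then
`𝒟_S(ω) = 1` if `ω ∈ Eᵢ∩Hᵢ` for some `i ∈ S`;
`𝒟_S(ω) = 0` if `ω ∈ Hᵢ∖Eᵢ` for every `i ∈ S`;
`𝒟_S(ω) = y_{T(ω)}` if `ω ∈ Hᵢ∖Eᵢ` for every `i ∈ S∖T(ω)` and `∅ ≠ T(ω) ⊊ S`;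
`y_S = E[𝒟_S·1_{⋃_{i∈S}Hᵢ}]/P(⋃_{i∈S}Hᵢ)`; and `𝒟_S(ω) = y_S` for `ω ∈ ⋂_{i∈S} Hᵢᶜ`. -/
structure DisjunctionSystem {Ω : Type*} [MeasurableSpace Ω] (P : Measure Ω)
    {n : ℕ} (E H : Fin n → Set Ω) (D : Finset (Fin n) → Ω → ℝ)
    (y : Finset (Fin n) → ℝ) : Prop where
  eq_one : ∀ S : Finset (Fin n), S.Nonempty → ∀ ω : Ω,
    (∃ i ∈ S, ω ∈ E i ∩ H i) → D S ω = 1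
  eq_zero : ∀ S : Finset (Fin n), S.Nonempty → ∀ ω : Ω,
    (∀ i ∈ S, ω ∈ H i ∧ ω ∉ E i) → D S ω = 0
  eq_part : ∀ S : Finset (Fin n), S.Nonempty → ∀ ω : Ω, ∀ T : Finset (Fin n),
    T ⊆ S → T.Nonempty → T ≠ S → (∀ i ∈ S, (i ∈ T ↔ ω ∉ H i)) →
    (∀ i ∈ S, i ∉ T → ω ∈ H i ∧ ω ∉ E i) → D S ω = y T
  prevision : ∀ S : Finset (Fin n), S.Nonempty →
    y S = (∫ ω in ⋃ i ∈ S, H i, D S ω ∂P) / (P (⋃ i ∈ S, H i)).toReal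
  eq_off : ∀ S : Finset (Fin n), S.Nonempty → ∀ ω : Ω,
    (∀ i ∈ S, ω ∉ H i) → D S ω = y S

open ProbabilityTheory Finset

section

variable {Ω ι : Type*} [MeasurableSpace Ω] {P μ : Measure Ω}

noncomputable def condProb (P : Measure Ω) (E H : Set Ω) : ℝ := P.real (E ∩ H) / P.real H

lemma condProb_nonneg {E H : Set Ω} : 0 ≤ condProb P E H := by
  unfold condProb; positivity

lemma condProb_le_one [IsFiniteMeasure P] {E H : Set Ω} : condProb P E H ≤ 1 :=
  div_le_one_of_le₀ (measureReal_mono Set.inter_subset_right) measureReal_nonneg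

lemma condProb_mul_measureReal [IsFiniteMeasure P] (E H : Set Ω) :
    condProb P E H * P.real H = P.real (E ∩ H) := by
  rcases eq_or_ne (P.real H) 0 with h | h
  · rw [h, mul_zero, eq_comm]
    exact le_antisymm (h ▸ measureReal_mono Set.inter_subset_right) measureReal_nonneg
  · exact div_mul_cancel₀ _ h

/-- De Finetti's indicator of the conditional event `E|H`: `1` on `E ∩ H`, `0` on `Eᶜ ∩ H`,
and `P(E|H)` off `H`. -/
noncomputable def condEvent (P : Measure Ω) (E H : Set Ω) : Ω → ℝ :=
  (E ∩ H).indicator (fun _ => 1) + Hᶜ.indicator fun _ => condProb P E H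

section condEvent

variable {E H : Set Ω} {ω : Ω}

lemma condEvent_nonneg : 0 ≤ condEvent P E H ω :=
  add_nonneg (Set.indicator_nonneg (fun _ _ => zero_le_one) ω)
    (Set.indicator_nonneg (fun _ _ => condProb_nonneg) ω)

lemma condEvent_le_one [IsFiniteMeasure P] : condEvent P E H ω ≤ 1 := by
  by_cases hH : ω ∈ H <;> by_cases hE : ω ∈ E <;>
    simp [condEvent, hH, hE, condProb_le_one]

lemma condEvent_of_mem (h : ω ∈ E ∩ H) : condEvent P E H ω = 1 := by
  simp [condEvent, h, h.2]

lemma condEvent_of_notMem (h : ω ∉ E ∩ H) :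
    condEvent P E H ω = Hᶜ.indicator (fun _ => condProb P E H) ω := by
  simp [condEvent, h]

lemma integrable_condEvent (hE : MeasurableSet E) (hH : MeasurableSet H)
    [IsFiniteMeasure μ] : Integrable (condEvent P E H) μ :=
  ((integrable_const 1).indicator (hE.inter hH)).add ((integrable_const _).indicator hH.compl)

lemma integral_condEvent_cond (hE : MeasurableSet E) (hH : MeasurableSet H) {U : Set Ω}
    (hU : MeasurableSet U) (hHU : H ⊆ U) [IsFiniteMeasure P] (hU0 : P U ≠ 0) :
    ∫ ω, condEvent P E H ω ∂P[|U] = condProb P E H := by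
  have hPU : P.real U ≠ 0 := (measureReal_ne_zero_iff (measure_ne_top P U)).mpr hU0
  have hcond : ∀ t, P[|U].real t = (P.real U)⁻¹ * P.real (U ∩ t) := fun t => by
    simp [Measure.real, cond_apply hU, ENNReal.toReal_mul, ENNReal.toReal_inv]
  have hdiff : P.real (U ∩ Hᶜ) = P.real U - P.real H := by
    rw [← Set.sdiff_eq, measureReal_sdiff hHU hH]
  simp only [condEvent, Pi.add_apply]
  rw [integral_add ((integrable_const 1).indicator (hE.inter hH))
      ((integrable_const _).indicator hH.compl), integral_indicator_const _ (hE.inter hH),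
    integral_indicator_const _ hH.compl, hcond, hcond, hdiff,
    Set.inter_eq_right.mpr (Set.inter_subset_right.trans hHU), ← condProb_mul_measureReal]
  simp only [smul_eq_mul]
  field_simp
  ring

end condEvent

structure FrechetBounds (S : Finset ι) (x : ι → ℝ) (v : ℝ) : Prop where
  le : ∀ i ∈ S, x i ≤ v
  le_one : v ≤ 1
  le_sum : v ≤ ∑ i ∈ S, x i

namespace FrechetBounds

variable {S T : Finset ι} {x x' : ι → ℝ} {v v' : ℝ}

lemma empty : FrechetBounds ∅ x 0 :=
  ⟨by simp, zero_le_one, by simp⟩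

lemma congr (h : FrechetBounds S x v) (hx : ∀ i ∈ S, x i = x' i) (hv : v = v') :
    FrechetBounds S x' v' :=
  ⟨fun i hi => hx i hi ▸ hv ▸ h.le i hi, hv ▸ h.le_one, hv ▸ (sum_congr rfl hx) ▸ h.le_sum⟩

lemma nonneg (h : FrechetBounds S x v) (hS : S.Nonempty) (hx : ∀ i ∈ S, 0 ≤ x i) : 0 ≤ v :=
  let ⟨i, hi⟩ := hS
  (hx i hi).trans (h.le i hi)

lemma extend [DecidableEq ι] (h : FrechetBounds T x v) (hTS : T ⊆ S) (hv : 0 ≤ v) :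
    FrechetBounds S (fun i => if i ∈ T then x i else 0) v where
  le i _ := by split_ifs with hiT; exacts [h.le i hiT, hv]
  le_one := h.le_one
  le_sum := by rw [sum_ite_mem, inter_eq_right.mpr hTS]; exact h.le_sum

lemma integral [IsProbabilityMeasure μ] {x : ι → Ω → ℝ} {v : Ω → ℝ}
    (hx : ∀ i ∈ S, Integrable (x i) μ) (hv : Integrable v μ)
    (h : ∀ᵐ ω ∂μ, FrechetBounds S (x · ω) (v ω)) :
    FrechetBounds S (fun i => ∫ ω, x i ω ∂μ) (∫ ω, v ω ∂μ) where
  le i hi := integral_mono_ae (hx i hi) hv (h.mono fun _ hω => hω.le i hi)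
  le_one := by
    simpa using integral_mono_ae hv (integrable_const 1) (h.mono fun _ hω => hω.le_one)
  le_sum := by
    rw [← integral_finsetSum S hx]
    exact integral_mono_ae hv (integrable_finsetSum S hx) (h.mono fun _ hω => hω.le_sum)

end FrechetBounds

/-- The empty disjunction is the impossible event, of prevision `0`. -/
noncomputable def previsionOrZero (y : Finset ι → ℝ) (T : Finset ι) : ℝ :=
  if T.Nonempty then y T else 0

/-- The value of `𝒟_S` at a point that lies in `E i` iff `e i` and in `H i` iff `h i`. -/
noncomputable def disjunctionValue (y : Finset ι → ℝ) (S : Finset ι) (e h : ι → Prop) : ℝ :=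
  open Classical in
  if ∃ i ∈ S, e i ∧ h i then 1 else previsionOrZero y (S.filter fun i => ¬h i)

namespace DisjunctionSystem

variable {n : ℕ} {E H : Fin n → Set Ω} {D : Finset (Fin n) → Ω → ℝ} {y : Finset (Fin n) → ℝ}
  {S : Finset (Fin n)}

lemma apply_eq (hsys : DisjunctionSystem P E H D y) (hS : S.Nonempty) (ω : Ω) :
    D S ω = disjunctionValue y S (fun i => ω ∈ E i) (fun i => ω ∈ H i) := by
  classical
  unfold disjunctionValue
  split_ifs with hA
  · exact hsys.eq_one S hS ω hA
  push Not at hA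
  have hout : ∀ i ∈ S, i ∉ S.filter (fun i => ω ∉ H i) → ω ∈ H i ∧ ω ∉ E i := by
    intro i hi hiT
    have hωH : ω ∈ H i := by simpa [hi] using hiT
    exact ⟨hωH, fun hωE => hA i hi hωE hωH⟩
  unfold previsionOrZero
  split_ifs with hT
  · by_cases hTS : S.filter (fun i => ω ∉ H i) = S
    · rw [hTS]
      exact hsys.eq_off S hS ω fun i hi => by rw [← hTS] at hi; exact (mem_filter.mp hi).2
    · exact hsys.eq_part S hS ω _ (filter_subset _ _) hT hTS (fun i hi => by simp [hi]) hout
  · exact hsys.eq_zero S hS ω fun i hi => hout i hi fun hiT => hT ⟨i, hiT⟩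

lemma integrable_apply (hsys : DisjunctionSystem P E H D y) (hE : ∀ i, MeasurableSet (E i))
    (hH : ∀ i, MeasurableSet (H i)) (hS : S.Nonempty) [IsFiniteMeasure μ] :
    Integrable (D S) μ := by
  have hpattern : Measurable fun ω => ((fun i => ω ∈ E i), (fun i => ω ∈ H i)) :=
    (measurable_pi_lambda _ fun i => measurableSet_setOfPred.mp (hE i)).prodMk
      (measurable_pi_lambda _ fun i => measurableSet_setOfPred.mp (hH i))
  have hD : D S = (fun p => disjunctionValue y S p.1 p.2) ∘
      fun ω => ((fun i => ω ∈ E i), (fun i => ω ∈ H i)) := funext (hsys.apply_eq hS)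
  rw [hD]
  exact Integrable.of_finite.comp_measurable hpattern

lemma prevision_eq_integral_cond (hsys : DisjunctionSystem P E H D y) (hS : S.Nonempty) :
    y S = ∫ ω, D S ω ∂P[|⋃ i ∈ S, H i] := by
  rw [hsys.prevision S hS, ProbabilityTheory.cond, integral_smul_measure, ENNReal.toReal_inv,
    smul_eq_mul, div_eq_inv_mul]

lemma frechetBounds_apply (hsys : DisjunctionSystem P E H D y) [IsFiniteMeasure P]
    (hS : S.Nonempty)
    (ih : ∀ T ⊂ S, T.Nonempty → FrechetBounds T (fun i => condProb P (E i) (H i)) (y T))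
    {ω : Ω} (hω : ω ∈ ⋃ i ∈ S, H i) :
    FrechetBounds S (fun i => condEvent P (E i) (H i) ω) (D S ω) := by
  classical
  rw [hsys.apply_eq hS, disjunctionValue]
  split_ifs with hA
  · obtain ⟨i, hi, hωi⟩ := hA
    exact ⟨fun j _ => condEvent_le_one, le_rfl,
      (condEvent_of_mem hωi).symm.le.trans (single_le_sum (fun j _ => condEvent_nonneg) hi)⟩
  push Not at hA
  set T := S.filter fun i => ω ∉ H i
  have hTS : T ⊂ S := filter_ssubset.mpr (by simpa using hω)
  have hT : FrechetBounds T (fun i => condProb P (E i) (H i)) (previsionOrZero y T) := by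
    unfold previsionOrZero
    split_ifs with hT
    · exact ih T hTS hT
    · exact not_nonempty_iff_eq_empty.mp hT ▸ FrechetBounds.empty
  refine (hT.extend hTS.subset ?_).congr (fun i hi => ?_) rfl
  · unfold previsionOrZero
    split_ifs with hT'
    · exact (ih T hTS hT').nonneg hT' fun _ _ => condProb_nonneg
    · exact le_rfl
  · rw [condEvent_of_notMem fun h => hA i hi h.1 h.2]
    simp [T, hi, Set.indicator_apply]

theorem frechetBounds (hsys : DisjunctionSystem P E H D y) [IsFiniteMeasure P]
    (hE : ∀ i, MeasurableSet (E i)) (hH : ∀ i, MeasurableSet (H i)) (hHpos : ∀ i, 0 < P (H i))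
    (S : Finset (Fin n)) (hS : S.Nonempty) :
    FrechetBounds S (fun i => condProb P (E i) (H i)) (y S) := by
  induction S using Finset.strongInduction with | H S ih =>
  set U := ⋃ i ∈ S, H i
  have hU : MeasurableSet U := S.measurableSet_biUnion fun i _ => hH i
  have hHU : ∀ i ∈ S, H i ⊆ U := fun i hi => Set.subset_biUnion_of_mem hi
  obtain ⟨j, hj⟩ := hS
  have hU0 : P U ≠ 0 := ((hHpos j).trans_le (measure_mono (hHU j hj))).ne'
  have : IsProbabilityMeasure P[|U] := cond_isProbabilityMeasure hU0
  have hpointwise : ∀ᵐ ω ∂P[|U],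
      FrechetBounds S (fun i => condEvent P (E i) (H i) ω) (D S ω) :=
    (ae_cond_mem hU).mono fun ω hω => hsys.frechetBounds_apply ⟨j, hj⟩ ih hω
  refine (FrechetBounds.integral (fun i _ => integrable_condEvent (hE i) (hH i))
    (hsys.integrable_apply hE hH ⟨j, hj⟩) hpointwise).congr (fun i hi => ?_)
    (hsys.prevision_eq_integral_cond ⟨j, hj⟩).symm
  exact integral_condEvent_cond (hE i) (hH i) hU (hHU i hi) hU0

end DisjunctionSystem

end

/-- For every `n ≥ 1`, the prevision `ηₙ := y_{{1,…,n}}` of the disjunction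
`𝒟ₙ` satisfies `max {P(E₁|H₁), …, P(Eₙ|Hₙ)} ≤ ηₙ ≤ min {P(E₁|H₁) + ⋯ + P(Eₙ|Hₙ), 1}`,
where `P(Eᵢ|Hᵢ) = P(Eᵢ∩Hᵢ)/P(Hᵢ)`. -/
theorem stmt8 {Ω : Type*} [MeasurableSpace Ω] (P : Measure Ω) [IsProbabilityMeasure P]
    (n : ℕ) (hn : 1 ≤ n) (E H : Fin n → Set Ω)
    (hE : ∀ i, MeasurableSet (E i)) (hH : ∀ i, MeasurableSet (H i))
    (hHpos : ∀ i, 0 < P (H i))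
    (D : Finset (Fin n) → Ω → ℝ) (y : Finset (Fin n) → ℝ)
    (hsys : DisjunctionSystem P E H D y) :
    Finset.univ.sup' (Finset.univ_nonempty_iff.mpr (Fin.pos_iff_nonempty.mp hn))
        (fun i => (P (E i ∩ H i)).toReal / (P (H i)).toReal) ≤ y Finset.univ ∧
      y Finset.univ ≤ min (∑ i, (P (E i ∩ H i)).toReal / (P (H i)).toReal) 1 := by
  have h := hsys.frechetBounds hE hH hHpos univ
    (univ_nonempty_iff.mpr (Fin.pos_iff_nonempty.mp hn))
  exact ⟨sup'_le _ _ fun i _ => h.le i (mem_univ i), le_min h.le_sum h.le_one⟩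
end

section
/- With the recursive definition of the conjunctions 𝒞_S below, the conjunction is monotone with respect to adding a conditional event: for every nonempty S ⊆ {1,…,n}, every j ∈ {1,…,n} with j ∉ S, and every ω ∈ Ω, one has 𝒞_{S∪{j}}(ω) ≤ 𝒞_S(ω). In particular, 𝒞_{{1,…,n}} ≤ 𝒞_{{1,…,n−1}} ≤ ⋯ ≤ 𝒞_{{1}} pointwise. -/
open MeasureTheory

open MeasureTheory

open Classical in
noncomputable def gfun {Ω : Type*} {n : ℕ} (E H : Fin n → Set Ω) (x : Finset (Fin n) → ℝ)
    (S : Finset (Fin n)) (ω : Ω) : ℝ :=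
  if ∃ i ∈ S, ω ∈ H i ∧ ω ∉ E i then 0
  else if ∀ i ∈ S, ω ∈ H i then 1
  else if ∀ i ∈ S, ω ∉ H i then x S
  else x (S.filter fun i => ω ∉ H i)

lemma measurable_gfun {Ω : Type*} [MeasurableSpace Ω] {n : ℕ} {E H : Fin n → Set Ω}
    (x : Finset (Fin n) → ℝ)
    (hE : ∀ i, MeasurableSet (E i)) (hH : ∀ i, MeasurableSet (H i)) (S : Finset (Fin n)) :
    Measurable (gfun E H x S) := by
  classical
  have hA : MeasurableSet {ω : Ω | ∃ i ∈ S, ω ∈ H i ∧ ω ∉ E i} := by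
    have h : {ω : Ω | ∃ i ∈ S, ω ∈ H i ∧ ω ∉ E i} = ⋃ i ∈ S, (H i ∩ (E i)ᶜ) := by
      ext ω
      simp only [Set.mem_setOf_eq, Set.mem_iUnion, Set.mem_inter_iff, Set.mem_compl_iff]
      tauto
    rw [h]
    exact S.measurableSet_biUnion fun i _ => (hH i).inter (hE i).compl
  have hB : MeasurableSet {ω : Ω | ∀ i ∈ S, ω ∈ H i} := by
    have h : {ω : Ω | ∀ i ∈ S, ω ∈ H i} = ⋂ i ∈ S, H i := by ext ω; simp
    rw [h]; exact S.measurableSet_biInter fun i _ => hH i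
  have hCm : MeasurableSet {ω : Ω | ∀ i ∈ S, ω ∉ H i} := by
    have h : {ω : Ω | ∀ i ∈ S, ω ∉ H i} = ⋂ i ∈ S, (H i)ᶜ := by ext ω; simp
    rw [h]; exact S.measurableSet_biInter fun i _ => (hH i).compl
  have hD : Measurable fun ω : Ω => x (S.filter fun i => ω ∉ H i) := by
    have key : ∀ ω : Ω, x (S.filter fun i => ω ∉ H i)
        = ∑ T ∈ S.powerset, if S.filter (fun i => ω ∉ H i) = T then x T else 0 := by
      intro ω
      rw [Finset.sum_ite_eq, if_pos (Finset.mem_powerset.2 (S.filter_subset _))]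
    simp_rw [key]
    apply Finset.measurable_sum
    intro T hT
    have hTS : T ⊆ S := Finset.mem_powerset.1 hT
    have hfib : MeasurableSet {ω : Ω | S.filter (fun i => ω ∉ H i) = T} := by
      have h : {ω : Ω | S.filter (fun i => ω ∉ H i) = T}
          = ⋂ i ∈ S, {ω : Ω | i ∈ T ↔ ω ∉ H i} := by
        ext ω
        simp only [Set.mem_setOf_eq, Set.mem_iInter, Finset.ext_iff, Finset.mem_filter]
        constructor
        · intro h i hi
          constructor
          · intro hiT; exact ((h i).2 hiT).2
          · intro hω; exact (h i).1 ⟨hi, hω⟩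
        · intro h i
          constructor
          · rintro ⟨hi, hω⟩; exact (h i hi).2 hω
          · intro hiT; exact ⟨hTS hiT, (h i (hTS hiT)).1 hiT⟩
      rw [h]
      refine S.measurableSet_biInter fun i _ => ?_
      by_cases hiT : i ∈ T
      · have h2 : {ω : Ω | i ∈ T ↔ ω ∉ H i} = (H i)ᶜ := by ext ω; simp [hiT]
        rw [h2]; exact (hH i).compl
      · have h2 : {ω : Ω | i ∈ T ↔ ω ∉ H i} = H i := by ext ω; simp [hiT]
        rw [h2]; exact hH i
    exact Measurable.ite hfib measurable_const measurable_const
  unfold gfun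
  exact Measurable.ite hA measurable_const
    (Measurable.ite hB measurable_const (Measurable.ite hCm measurable_const hD))

lemma C_eq_gfun {Ω : Type*} [MeasurableSpace Ω] {P : Measure Ω} {n : ℕ}
    {E H : Fin n → Set Ω} {C : Finset (Fin n) → Ω → ℝ} {x : Finset (Fin n) → ℝ}
    (hsys : ConjunctionSystem P E H C x) {S : Finset (Fin n)} (hS : S.Nonempty) :
    C S = gfun E H x S := by
  classical
  funext ω
  unfold gfun
  split_ifs with h1 h2 h3
  · exact hsys.eq_zero S hS ω h1
  · refine hsys.eq_one S hS ω fun i hi => ⟨?_, h2 i hi⟩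
    by_contra hEi
    exact h1 ⟨i, hi, h2 i hi, hEi⟩
  · exact hsys.eq_off S hS ω h3
  · push_neg at h2 h3
    obtain ⟨i0, hi0, hHi0⟩ := h2
    obtain ⟨i1, hi1, hHi1⟩ := h3
    refine hsys.eq_part S hS ω _ (S.filter_subset _) ⟨i0, Finset.mem_filter.2 ⟨hi0, hHi0⟩⟩ ?_ ?_ ?_
    · intro hEq
      have : i1 ∈ S.filter fun i => ω ∉ H i := by rw [hEq]; exact hi1
      exact (Finset.mem_filter.1 this).2 hHi1
    · intro i hi; simp [Finset.mem_filter, hi]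
    · intro i hi hiT
      have hHi : ω ∈ H i := by
        by_contra h
        exact hiT (Finset.mem_filter.2 ⟨hi, h⟩)
      refine ⟨?_, hHi⟩
      by_contra hEi
      exact h1 ⟨i, hi, hHi, hEi⟩

lemma conj_bounds {Ω : Type*} [MeasurableSpace Ω] {P : Measure Ω} [IsProbabilityMeasure P]
    {n : ℕ} {E H : Fin n → Set Ω} {C : Finset (Fin n) → Ω → ℝ} {x : Finset (Fin n) → ℝ}
    (hE : ∀ i, MeasurableSet (E i)) (hH : ∀ i, MeasurableSet (H i))
    (hHpos : ∀ i, 0 < P (H i)) (hsys : ConjunctionSystem P E H C x) :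
    ∀ m : ℕ, ∀ S : Finset (Fin n), S.card ≤ m → S.Nonempty →
      (∀ ω, 0 ≤ C S ω ∧ C S ω ≤ 1) ∧ (0 ≤ x S ∧ x S ≤ 1) := by
  classical
  intro m
  induction m with
  | zero =>
    intro S hcard hS
    simp [Finset.card_eq_zero.1 (Nat.le_zero.1 hcard)] at hS
  | succ m ih =>
    intro S hcard hS
    have hU : MeasurableSet (⋃ i ∈ S, H i) := S.measurableSet_biUnion fun i _ => hH i
    have hUpos : 0 < P (⋃ i ∈ S, H i) := by
      obtain ⟨i, hi⟩ := hS
      exact lt_of_lt_of_le (hHpos i) (measure_mono (Set.subset_biUnion_of_mem (u := H) hi))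
    have hPU : 0 < (P (⋃ i ∈ S, H i)).toReal :=
      ENNReal.toReal_pos hUpos.ne' (measure_ne_top P _)
    have hOnU : ∀ ω ∈ (⋃ i ∈ S, H i), 0 ≤ C S ω ∧ C S ω ≤ 1 := by
      intro ω hω
      obtain ⟨i0, hi0, hωi0⟩ : ∃ i ∈ S, ω ∈ H i := by simpa using hω
      by_cases h1 : ∃ i ∈ S, ω ∈ H i ∧ ω ∉ E i
      · rw [hsys.eq_zero S hS ω h1]; exact ⟨le_refl _, zero_le_one⟩
      · push_neg at h1
        by_cases h2 : ∀ i ∈ S, ω ∈ H i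
        · rw [hsys.eq_one S hS ω fun i hi => ⟨h1 i hi (h2 i hi), h2 i hi⟩]
          exact ⟨zero_le_one, le_refl _⟩
        · push_neg at h2
          obtain ⟨i1, hi1, hωi1⟩ := h2
          set T := S.filter fun i => ω ∉ H i with hTdef
          have hTsub : T ⊆ S := S.filter_subset _
          have hTne : T.Nonempty := ⟨i1, Finset.mem_filter.2 ⟨hi1, hωi1⟩⟩
          have hTneS : T ≠ S := by
            intro h
            have : i0 ∈ T := h ▸ hi0
            exact (Finset.mem_filter.1 this).2 hωi0
          have hCT : C S ω = x T := by
            refine hsys.eq_part S hS ω T hTsub hTne hTneS ?_ ?_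
            · intro i hi; simp [hTdef, Finset.mem_filter, hi]
            · intro i hi hiT
              have hHi : ω ∈ H i := by
                by_contra h; exact hiT (Finset.mem_filter.2 ⟨hi, h⟩)
              exact ⟨h1 i hi hHi, hHi⟩
          have hTcard : T.card ≤ m :=
            Nat.lt_succ_iff.1 (lt_of_lt_of_le (Finset.card_lt_card (hTsub.ssubset_of_ne hTneS)) hcard)
          rw [hCT]
          exact (ih T hTcard hTne).2
    have hCg : C S = gfun E H x S := C_eq_gfun hsys hS
    have hgOnU : ∀ ω ∈ (⋃ i ∈ S, H i), 0 ≤ gfun E H x S ω ∧ gfun E H x S ω ≤ 1 := by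
      rw [← hCg]; exact hOnU
    have hint : IntegrableOn (gfun E H x S) (⋃ i ∈ S, H i) P := by
      refine Measure.integrableOn_of_bounded (M := 1) (measure_ne_top P _)
        (measurable_gfun x hE hH S).aestronglyMeasurable
        ((ae_restrict_iff' hU).2 (ae_of_all _ ?_))
      intro ω hω
      rw [Real.norm_eq_abs, abs_le]
      exact ⟨by linarith [(hgOnU ω hω).1], (hgOnU ω hω).2⟩
    have hxS : x S = (∫ ω in ⋃ i ∈ S, H i, gfun E H x S ω ∂P) / (P (⋃ i ∈ S, H i)).toReal := by
      rw [hsys.prevision S hS, hCg]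
    have h0 : 0 ≤ ∫ ω in ⋃ i ∈ S, H i, gfun E H x S ω ∂P :=
      setIntegral_nonneg hU fun ω hω => (hgOnU ω hω).1
    have h1' : ∫ ω in ⋃ i ∈ S, H i, gfun E H x S ω ∂P ≤ (P (⋃ i ∈ S, H i)).toReal := by
      calc ∫ ω in ⋃ i ∈ S, H i, gfun E H x S ω ∂P
          ≤ ∫ _ω in ⋃ i ∈ S, H i, (1 : ℝ) ∂P :=
            setIntegral_mono_on hint (integrableOn_const (measure_ne_top P _)) hU
              fun ω hω => (hgOnU ω hω).2
        _ = (P (⋃ i ∈ S, H i)).toReal := by simp [Measure.real]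
    have hx0 : 0 ≤ x S := by
      rw [hxS]; exact div_nonneg h0 ENNReal.toReal_nonneg
    have hx1 : x S ≤ 1 := by
      rw [hxS]; exact (div_le_one hPU).2 h1'
    refine ⟨fun ω => ?_, hx0, hx1⟩
    by_cases hω : ω ∈ ⋃ i ∈ S, H i
    · exact hOnU ω hω
    · have hout : ∀ i ∈ S, ω ∉ H i := fun i hi hHi => hω (Set.mem_biUnion hi hHi)
      rw [hsys.eq_off S hS ω hout]
      exact ⟨hx0, hx1⟩

lemma conj_mono {Ω : Type*} [MeasurableSpace Ω] {P : Measure Ω} [IsProbabilityMeasure P]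
    {n : ℕ} {E H : Fin n → Set Ω} {C : Finset (Fin n) → Ω → ℝ} {x : Finset (Fin n) → ℝ}
    (hE : ∀ i, MeasurableSet (E i)) (hH : ∀ i, MeasurableSet (H i))
    (hHpos : ∀ i, 0 < P (H i)) (hsys : ConjunctionSystem P E H C x) :
    ∀ m : ℕ, ∀ S : Finset (Fin n), S.card ≤ m → S.Nonempty → ∀ j ∉ S,
      (∀ ω, C (insert j S) ω ≤ C S ω) ∧ x (insert j S) ≤ x S := by
  classical
  have hb := fun (T : Finset (Fin n)) (hT : T.Nonempty) =>
    conj_bounds hE hH hHpos hsys T.card T le_rfl hT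
  intro m
  induction m with
  | zero =>
    intro S hcard hS
    simp [Finset.card_eq_zero.1 (Nat.le_zero.1 hcard)] at hS
  | succ m ih =>
    intro S hcard hS j hj
    have hS' : (insert j S).Nonempty := Finset.insert_nonempty _ _
    have hU : MeasurableSet (⋃ i ∈ S, H i) := S.measurableSet_biUnion fun i _ => hH i
    have hV : MeasurableSet (H j \ ⋃ i ∈ S, H i) := (hH j).diff hU
    have hUpos : 0 < P (⋃ i ∈ S, H i) := by
      obtain ⟨i, hi⟩ := hS
      exact lt_of_lt_of_le (hHpos i) (measure_mono (Set.subset_biUnion_of_mem (u := H) hi))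
    have hPU : 0 < (P (⋃ i ∈ S, H i)).toReal :=
      ENNReal.toReal_pos hUpos.ne' (measure_ne_top P _)
    have hU'eq : (⋃ i ∈ insert j S, H i) = (⋃ i ∈ S, H i) ∪ (H j \ ⋃ i ∈ S, H i) := by
      rw [Finset.set_biUnion_insert, Set.union_diff_self, Set.union_comm]
    have hU'pos : 0 < P (⋃ i ∈ insert j S, H i) := by
      refine lt_of_lt_of_le hUpos (measure_mono ?_)
      rw [hU'eq]; exact Set.subset_union_left
    have hPU' : 0 < (P (⋃ i ∈ insert j S, H i)).toReal :=
      ENNReal.toReal_pos hU'pos.ne' (measure_ne_top P _)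
    -- claim 1 : pointwise monotonicity on the union of the H i, i ∈ S
    have claim1 : ∀ ω ∈ ⋃ i ∈ S, H i, C (insert j S) ω ≤ C S ω := by
      intro ω hω
      obtain ⟨i0, hi0, hωi0⟩ : ∃ i ∈ S, ω ∈ H i := by simpa using hω
      by_cases h1 : ∃ i ∈ insert j S, ω ∈ H i ∧ ω ∉ E i
      · rw [hsys.eq_zero _ hS' ω h1]
        exact ((hb S hS).1 ω).1
      · push_neg at h1
        by_cases h2 : ∀ i ∈ insert j S, ω ∈ H i
        · rw [hsys.eq_one _ hS' ω fun i hi => ⟨h1 i hi (h2 i hi), h2 i hi⟩,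
            hsys.eq_one S hS ω fun i hi =>
              ⟨h1 i (Finset.mem_insert_of_mem hi) (h2 i (Finset.mem_insert_of_mem hi)),
                h2 i (Finset.mem_insert_of_mem hi)⟩]
        · push_neg at h2
          obtain ⟨i1, hi1, hωi1⟩ := h2
          have hT'ne : ((insert j S).filter fun i => ω ∉ H i).Nonempty :=
            ⟨i1, Finset.mem_filter.2 ⟨hi1, hωi1⟩⟩
          have hT'neS' : (insert j S).filter (fun i => ω ∉ H i) ≠ insert j S := by
            intro h
            have : i0 ∈ (insert j S).filter fun i => ω ∉ H i := by
              rw [h]; exact Finset.mem_insert_of_mem hi0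
            exact (Finset.mem_filter.1 this).2 hωi0
          have hCS' : C (insert j S) ω = x ((insert j S).filter fun i => ω ∉ H i) := by
            refine hsys.eq_part _ hS' ω _ (Finset.filter_subset _ _) hT'ne hT'neS' ?_ ?_
            · intro i hi; simp [Finset.mem_filter, hi]
            · intro i hi hiT
              have hHi : ω ∈ H i := by
                by_contra h; exact hiT (Finset.mem_filter.2 ⟨hi, h⟩)
              exact ⟨h1 i hi hHi, hHi⟩
          rw [hCS']
          by_cases h4 : ∀ i ∈ S, ω ∈ H i
          · rw [hsys.eq_one S hS ω fun i hi =>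
              ⟨h1 i (Finset.mem_insert_of_mem hi) (h4 i hi), h4 i hi⟩]
            exact (hb _ hT'ne).2.2
          · push_neg at h4
            obtain ⟨i2, hi2, hωi2⟩ := h4
            have hTne : (S.filter fun i => ω ∉ H i).Nonempty :=
              ⟨i2, Finset.mem_filter.2 ⟨hi2, hωi2⟩⟩
            have hTneS : S.filter (fun i => ω ∉ H i) ≠ S := by
              intro h
              have : i0 ∈ S.filter fun i => ω ∉ H i := by rw [h]; exact hi0
              exact (Finset.mem_filter.1 this).2 hωi0
            have hCS : C S ω = x (S.filter fun i => ω ∉ H i) := by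
              refine hsys.eq_part S hS ω _ (Finset.filter_subset _ _) hTne hTneS ?_ ?_
              · intro i hi; simp [Finset.mem_filter, hi]
              · intro i hi hiT
                have hHi : ω ∈ H i := by
                  by_contra h; exact hiT (Finset.mem_filter.2 ⟨hi, h⟩)
                exact ⟨h1 i (Finset.mem_insert_of_mem hi) hHi, hHi⟩
            rw [hCS]
            by_cases hjH : ω ∈ H j
            · have heq : (insert j S).filter (fun i => ω ∉ H i) = S.filter fun i => ω ∉ H i := by
                rw [Finset.filter_insert, if_neg (by simpa using hjH)]
              rw [heq]
            · have heq : (insert j S).filter (fun i => ω ∉ H i)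
                  = insert j (S.filter fun i => ω ∉ H i) := by
                rw [Finset.filter_insert, if_pos hjH]
              have hjT : j ∉ S.filter fun i => ω ∉ H i :=
                fun h => hj (Finset.filter_subset _ _ h)
              have hTcard : (S.filter fun i => ω ∉ H i).card ≤ m :=
                Nat.lt_succ_iff.1 (lt_of_lt_of_le
                  (Finset.card_lt_card ((Finset.filter_subset _ _).ssubset_of_ne hTneS)) hcard)
              rw [heq]
              exact (ih _ hTcard hTne j hjT).2
    -- claim 2 : on H j minus the union, C (insert j S) is between 0 and x S
    have claim2 : ∀ ω, ω ∈ H j → (∀ i ∈ S, ω ∉ H i) →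
        0 ≤ C (insert j S) ω ∧ C (insert j S) ω ≤ x S := by
      intro ω hjH hout
      have hx0 : 0 ≤ x S := (hb S hS).2.1
      by_cases hEj : ω ∈ E j
      · have hno : C (insert j S) ω = x S := by
          refine hsys.eq_part _ hS' ω S (Finset.subset_insert _ _) hS
            (by intro h; exact hj (by rw [h]; exact Finset.mem_insert_self j S)) ?_ ?_
          · intro i hi
            rcases Finset.mem_insert.1 hi with rfl | hiS
            · simp [hj, hjH]
            · simp [hiS, hout i hiS]
          · intro i hi hiS
            rcases Finset.mem_insert.1 hi with rfl | h
            · exact ⟨hEj, hjH⟩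
            · exact absurd h hiS
        rw [hno]; exact ⟨hx0, le_refl _⟩
      · rw [hsys.eq_zero _ hS' ω ⟨j, Finset.mem_insert_self _ _, hjH, hEj⟩]
        exact ⟨le_refl _, hx0⟩
    -- integrability and integral comparisons
    have hCg' : C (insert j S) = gfun E H x (insert j S) := C_eq_gfun hsys hS'
    have hCg : C S = gfun E H x S := C_eq_gfun hsys hS
    have hbd' : ∀ ω, ‖gfun E H x (insert j S) ω‖ ≤ 1 := by
      intro ω
      rw [← hCg', Real.norm_eq_abs, abs_le]
      have h := (hb _ hS').1 ω
      exact ⟨by linarith [h.1], h.2⟩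
    have hbd : ∀ ω, ‖gfun E H x S ω‖ ≤ 1 := by
      intro ω
      rw [← hCg, Real.norm_eq_abs, abs_le]
      have h := (hb _ hS).1 ω
      exact ⟨by linarith [h.1], h.2⟩
    have hint' : ∀ A : Set Ω, IntegrableOn (gfun E H x (insert j S)) A P := fun A =>
      Measure.integrableOn_of_bounded (M := 1) (measure_ne_top P _)
        (measurable_gfun x hE hH _).aestronglyMeasurable (ae_of_all _ fun ω => hbd' ω)
    have hint : ∀ A : Set Ω, IntegrableOn (gfun E H x S) A P := fun A =>
      Measure.integrableOn_of_bounded (M := 1) (measure_ne_top P _)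
        (measurable_gfun x hE hH _).aestronglyMeasurable (ae_of_all _ fun ω => hbd ω)
    have hsplit : ∫ ω in ⋃ i ∈ insert j S, H i, gfun E H x (insert j S) ω ∂P
        = (∫ ω in ⋃ i ∈ S, H i, gfun E H x (insert j S) ω ∂P)
          + ∫ ω in H j \ ⋃ i ∈ S, H i, gfun E H x (insert j S) ω ∂P := by
      rw [hU'eq]
      exact setIntegral_union Set.disjoint_sdiff_right hV (hint' _) (hint' _)
    have hIU : ∫ ω in ⋃ i ∈ S, H i, gfun E H x S ω ∂P = x S * (P (⋃ i ∈ S, H i)).toReal := by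
      rw [hsys.prevision S hS, hCg, div_mul_cancel₀]
      exact ne_of_gt hPU
    have hIU' : ∫ ω in ⋃ i ∈ S, H i, gfun E H x (insert j S) ω ∂P
        ≤ ∫ ω in ⋃ i ∈ S, H i, gfun E H x S ω ∂P := by
      refine setIntegral_mono_on (hint' _) (hint _) hU fun ω hω => ?_
      rw [← hCg', ← hCg]
      exact claim1 ω hω
    have hIV : ∫ ω in H j \ ⋃ i ∈ S, H i, gfun E H x (insert j S) ω ∂P
        ≤ x S * (P (H j \ ⋃ i ∈ S, H i)).toReal := by
      calc ∫ ω in H j \ ⋃ i ∈ S, H i, gfun E H x (insert j S) ω ∂P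
          ≤ ∫ _ω in H j \ ⋃ i ∈ S, H i, x S ∂P := by
            refine setIntegral_mono_on (hint' _)
              (integrableOn_const (measure_ne_top P _)) hV fun ω hω => ?_
            have hout : ∀ i ∈ S, ω ∉ H i := fun i hi hHi => hω.2 (Set.mem_biUnion hi hHi)
            rw [← hCg']
            exact (claim2 ω hω.1 hout).2
        _ = x S * (P (H j \ ⋃ i ∈ S, H i)).toReal := by
            rw [setIntegral_const, smul_eq_mul, mul_comm, Measure.real]
    have hPUV : (P (⋃ i ∈ insert j S, H i)).toReal
        = (P (⋃ i ∈ S, H i)).toReal + (P (H j \ ⋃ i ∈ S, H i)).toReal := by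
      rw [hU'eq, measure_union Set.disjoint_sdiff_right hV,
        ENNReal.toReal_add (measure_ne_top P _) (measure_ne_top P _)]
    have hfinal : x (insert j S) ≤ x S := by
      rw [hsys.prevision _ hS', hCg', div_le_iff₀ hPU']
      calc ∫ ω in ⋃ i ∈ insert j S, H i, gfun E H x (insert j S) ω ∂P
          = (∫ ω in ⋃ i ∈ S, H i, gfun E H x (insert j S) ω ∂P)
            + ∫ ω in H j \ ⋃ i ∈ S, H i, gfun E H x (insert j S) ω ∂P := hsplit
        _ ≤ x S * (P (⋃ i ∈ S, H i)).toReal + x S * (P (H j \ ⋃ i ∈ S, H i)).toReal :=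
            add_le_add (le_trans hIU' (le_of_eq hIU)) hIV
        _ = x S * (P (⋃ i ∈ insert j S, H i)).toReal := by rw [hPUV]; ring
    refine ⟨fun ω => ?_, hfinal⟩
    by_cases hω : ω ∈ ⋃ i ∈ S, H i
    · exact claim1 ω hω
    · have hout : ∀ i ∈ S, ω ∉ H i := fun i hi hHi => hω (Set.mem_biUnion hi hHi)
      rw [hsys.eq_off S hS ω hout]
      by_cases hjH : ω ∈ H j
      · exact (claim2 ω hjH hout).2
      · have hout' : ∀ i ∈ insert j S, ω ∉ H i := by
          intro i hi
          rcases Finset.mem_insert.1 hi with rfl | h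
          · exact hjH
          · exact hout i h
        rw [hsys.eq_off _ hS' ω hout']
        exact hfinal

/-- The conjunction is monotone with respect to adding a conditional event:
for every nonempty `S ⊆ {1,…,n}`, every `j ∈ {1,…,n}` with `j ∉ S`, and every `ω ∈ Ω`,
one has `𝒞_{S∪{j}}(ω) ≤ 𝒞_S(ω)`. -/
theorem stmt9 {Ω : Type*} [MeasurableSpace Ω] (P : Measure Ω) [IsProbabilityMeasure P]
    (n : ℕ) (E H : Fin n → Set Ω)
    (hE : ∀ i, MeasurableSet (E i)) (hH : ∀ i, MeasurableSet (H i))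
    (hHpos : ∀ i, 0 < P (H i))
    (C : Finset (Fin n) → Ω → ℝ) (x : Finset (Fin n) → ℝ)
    (hsys : ConjunctionSystem P E H C x) :
    ∀ S : Finset (Fin n), S.Nonempty → ∀ j : Fin n, j ∉ S → ∀ ω : Ω,
      C (insert j S) ω ≤ C S ω := by
  intro S hS j hj ω
  exact (conj_mono hE hH hHpos hsys S.card S le_rfl hS j hj).1 ω
end

section
/- With the recursive definition of the disjunctions 𝒟_S below, the disjunction is monotone with respect to adding a conditional event: for every nonempty S ⊆ {1,…,n}, every j ∈ {1,…,n} with j ∉ S, and every ω ∈ Ω, one has 𝒟_{S∪{j}}(ω) ≥ 𝒟_S(ω). In particular, 𝒟_{{1,…,n}} ≥ 𝒟_{{1,…,n−1}} ≥ ⋯ ≥ 𝒟_{{1}} pointwise. -/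
open MeasureTheory

open MeasureTheory

open scoped Classical

namespace Stmt10Aux

set_option linter.unusedSectionVars false
variable {Ω : Type*} [MeasurableSpace Ω] {P : Measure Ω} {n : ℕ}
  {E H : Fin n → Set Ω} {D : Finset (Fin n) → Ω → ℝ} {y : Finset (Fin n) → ℝ}

/-- The set `T(ω)` of indices `i ∈ S` with `ω ∉ H i`. -/
noncomputable def Tof (H : Fin n → Set Ω) (S : Finset (Fin n)) (ω : Ω) : Finset (Fin n) :=
  S.filter fun i => ω ∉ H i

lemma Tof_subset (S : Finset (Fin n)) (ω : Ω) : Tof H S ω ⊆ S := Finset.filter_subset _ _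

lemma mem_Tof {S : Finset (Fin n)} {ω : Ω} {i : Fin n} :
    i ∈ Tof H S ω ↔ i ∈ S ∧ ω ∉ H i := Finset.mem_filter

lemma Tof_insert (S : Finset (Fin n)) (j : Fin n) (ω : Ω) :
    Tof H (insert j S) ω = if ω ∉ H j then insert j (Tof H S ω) else Tof H S ω := by
  simp [Tof, Finset.filter_insert]

/-- Value of `D S ω` when there is no `i ∈ S` with `ω ∈ E i ∩ H i`. -/
lemma Dval (hsys : DisjunctionSystem P E H D y) (S : Finset (Fin n)) (hS : S.Nonempty)
    (ω : Ω) (hnoE : ∀ i ∈ S, ω ∈ H i → ω ∉ E i) :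
    D S ω = if Tof H S ω = ∅ then 0 else y (Tof H S ω) := by
  split_ifs with h0
  · refine hsys.eq_zero S hS ω fun i hi => ?_
    have hHi : ω ∈ H i := by
      by_contra hx
      have : i ∈ Tof H S ω := mem_Tof.2 ⟨hi, hx⟩
      simp [h0] at this
    exact ⟨hHi, hnoE i hi hHi⟩
  · by_cases hTS : Tof H S ω = S
    · have : D S ω = y S := hsys.eq_off S hS ω fun i hi => by
        have : i ∈ Tof H S ω := by rw [hTS]; exact hi
        exact (mem_Tof.1 this).2
      rw [this, hTS]
    · refine hsys.eq_part S hS ω (Tof H S ω) (Tof_subset S ω)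
        (Finset.nonempty_iff_ne_empty.2 h0) hTS
        (fun i hi => by simp [mem_Tof, hi])
        (fun i hi hiT => ?_)
      have hHi : ω ∈ H i := by
        by_contra hx
        exact hiT (mem_Tof.2 ⟨hi, hx⟩)
      exact ⟨hHi, hnoE i hi hHi⟩

/-- `D S` is a measurable function. -/
lemma measD (hsys : DisjunctionSystem P E H D y) (hE : ∀ i, MeasurableSet (E i))
    (hH : ∀ i, MeasurableSet (H i)) (S : Finset (Fin n)) (hS : S.Nonempty) :
    Measurable (D S) := by
  have hfun : D S = fun ω =>
      if ω ∈ ⋃ i ∈ S, E i ∩ H i then (1 : ℝ)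
      else ∑ T ∈ S.powerset,
        Set.indicator (⋂ i ∈ (S : Set (Fin n)), if i ∈ T then (H i)ᶜ else H i)
          (fun _ => if T = ∅ then 0 else y T) ω := by
    funext ω
    by_cases hex : ∃ i ∈ S, ω ∈ E i ∩ H i
    · have hmem : ω ∈ ⋃ i ∈ S, E i ∩ H i := by
        obtain ⟨i, hi, hω⟩ := hex
        exact Set.mem_biUnion hi hω
      rw [hsys.eq_one S hS ω hex, if_pos hmem]
    · have hnm : ω ∉ ⋃ i ∈ S, E i ∩ H i := by
        intro hmem
        obtain ⟨i, hi, hω⟩ := Set.mem_iUnion₂.1 hmem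
        exact hex ⟨i, hi, hω⟩
      have hnoE : ∀ i ∈ S, ω ∈ H i → ω ∉ E i := fun i hi hHi hEi => hex ⟨i, hi, hEi, hHi⟩
      rw [Dval hsys S hS ω hnoE, if_neg hnm]
      rw [Finset.sum_eq_single_of_mem (Tof H S ω) (Finset.mem_powerset.2 (Tof_subset S ω))]
      · rw [Set.indicator_of_mem]
        refine Set.mem_biInter fun i hi => ?_
        by_cases hiT : i ∈ Tof H S ω
        · rw [if_pos hiT]; exact (mem_Tof.1 hiT).2
        · rw [if_neg hiT]
          by_contra hx
          exact hiT (mem_Tof.2 ⟨hi, hx⟩)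
      · intro T hT hne
        refine Set.indicator_of_notMem (fun hmem => hne ?_) _
        have hTS : T ⊆ S := Finset.mem_powerset.1 hT
        refine Finset.ext fun i => ?_
        constructor
        · intro hiT
          have := Set.mem_iInter₂.1 hmem i (hTS hiT)
          rw [if_pos hiT] at this
          exact mem_Tof.2 ⟨hTS hiT, this⟩
        · intro hiTof
          obtain ⟨hiS, hωH⟩ := mem_Tof.1 hiTof
          by_contra hiT
          have := Set.mem_iInter₂.1 hmem i hiS
          rw [if_neg hiT] at this
          exact hωH this
  rw [hfun]
  refine Measurable.ite ?_ measurable_const ?_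
  · exact MeasurableSet.biUnion S.countable_toSet fun i _ => (hE i).inter (hH i)
  · refine Finset.measurable_sum _ fun T _ => ?_
    refine Measurable.indicator measurable_const ?_
    refine MeasurableSet.biInter S.countable_toSet fun i _ => ?_
    by_cases hiT : i ∈ T
    · rw [if_pos hiT]; exact (hH i).compl
    · rw [if_neg hiT]; exact hH i


/-- Boundedness of `y S` and `D S` in `[0,1]`. -/
lemma bounds (hsys : DisjunctionSystem P E H D y) [IsProbabilityMeasure P]
    (hE : ∀ i, MeasurableSet (E i)) (hH : ∀ i, MeasurableSet (H i))
    (hHpos : ∀ i, 0 < P (H i)) :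
    ∀ k : ℕ, ∀ S : Finset (Fin n), S.card = k → S.Nonempty →
      (0 ≤ y S ∧ y S ≤ 1) ∧ ∀ ω, 0 ≤ D S ω ∧ D S ω ≤ 1 := by
  intro k
  induction k using Nat.strong_induction_on with
  | _ k IH =>
    intro S hcard hS
    set A := ⋃ i ∈ S, H i with hAdef
    have hAmeas : MeasurableSet A := MeasurableSet.biUnion S.countable_toSet fun i _ => hH i
    have hDA : ∀ ω ∈ A, 0 ≤ D S ω ∧ D S ω ≤ 1 := by
      intro ω hω
      obtain ⟨i0, hi0, hωH⟩ := Set.mem_iUnion₂.1 hω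
      by_cases hex : ∃ i ∈ S, ω ∈ E i ∩ H i
      · rw [hsys.eq_one S hS ω hex]; exact ⟨zero_le_one, le_refl 1⟩
      · have hnoE : ∀ i ∈ S, ω ∈ H i → ω ∉ E i := fun i hi h1 h2 => hex ⟨i, hi, h2, h1⟩
        rw [Dval hsys S hS ω hnoE]
        split_ifs with h0
        · exact ⟨le_refl 0, zero_le_one⟩
        · have hTne : Tof H S ω ≠ S := by
            intro hEq
            have : i0 ∈ Tof H S ω := by rw [hEq]; exact hi0
            exact (mem_Tof.1 this).2 hωH
          have hlt : (Tof H S ω).card < k :=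
            hcard ▸ Finset.card_lt_card ((Tof_subset S ω).ssubset_of_ne hTne)
          exact (IH _ hlt _ rfl (Finset.nonempty_iff_ne_empty.2 h0)).1
    obtain ⟨i0, hi0⟩ := id hS
    have hPA_pos : 0 < P A :=
      lt_of_lt_of_le (hHpos i0) (measure_mono (show H i0 ⊆ A from Set.subset_iUnion₂ (s := fun i _ => H i) i0 hi0))
    have hPA_toReal_pos : 0 < (P A).toReal :=
      ENNReal.toReal_pos hPA_pos.ne' (measure_ne_top P A)
    have hint : IntegrableOn (D S) A P := by
      refine Integrable.mono' (integrable_const 1)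
        ((measD hsys hE hH S hS).aestronglyMeasurable) ?_
      refine (ae_restrict_iff' hAmeas).2 (Filter.Eventually.of_forall fun ω hω => ?_)
      rw [Real.norm_eq_abs, abs_le]
      exact ⟨by linarith [(hDA ω hω).1], (hDA ω hω).2⟩
    have hints0 : 0 ≤ ∫ ω in A, D S ω ∂P :=
      setIntegral_nonneg hAmeas fun ω hω => (hDA ω hω).1
    have hintle : ∫ ω in A, D S ω ∂P ≤ (P A).toReal := by
      have h1 : ∫ ω in A, D S ω ∂P ≤ ∫ _ in A, (1 : ℝ) ∂P :=
        setIntegral_mono_on hint (integrableOn_const (measure_ne_top P A))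
          hAmeas fun ω hω => (hDA ω hω).2
      simpa [setIntegral_const, Measure.real] using h1
    have hy0 : 0 ≤ y S := by
      rw [hsys.prevision S hS]; exact div_nonneg hints0 hPA_toReal_pos.le
    have hy1 : y S ≤ 1 := by
      rw [hsys.prevision S hS]; exact (div_le_one hPA_toReal_pos).2 hintle
    refine ⟨⟨hy0, hy1⟩, fun ω => ?_⟩
    by_cases hω : ω ∈ A
    · exact hDA ω hω
    · have hoff : ∀ i ∈ S, ω ∉ H i := fun i hi hHi => hω (Set.mem_biUnion hi hHi)
      rw [hsys.eq_off S hS ω hoff]; exact ⟨hy0, hy1⟩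

/-- Integrability of `D S` on any measurable set. -/
lemma intOn (hsys : DisjunctionSystem P E H D y) [IsProbabilityMeasure P]
    (hE : ∀ i, MeasurableSet (E i)) (hH : ∀ i, MeasurableSet (H i))
    (hHpos : ∀ i, 0 < P (H i)) (S : Finset (Fin n)) (hS : S.Nonempty)
    (A : Set Ω) : IntegrableOn (D S) A P := by
  refine Integrable.mono' (integrable_const 1)
    ((measD hsys hE hH S hS).aestronglyMeasurable) ?_
  refine Filter.Eventually.of_forall fun ω => ?_
  rw [Real.norm_eq_abs, abs_le]
  obtain ⟨h0, h1⟩ := (bounds hsys hE hH hHpos S.card S rfl hS).2 ω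
  exact ⟨by linarith, h1⟩


/-- Main monotonicity lemma, by strong induction on the cardinality. -/
lemma main (hsys : DisjunctionSystem P E H D y) [IsProbabilityMeasure P]
    (hE : ∀ i, MeasurableSet (E i)) (hH : ∀ i, MeasurableSet (H i))
    (hHpos : ∀ i, 0 < P (H i)) :
    ∀ k : ℕ, ∀ S : Finset (Fin n), S.card = k → S.Nonempty → ∀ j ∉ S,
      (y S ≤ y (insert j S)) ∧ ∀ ω, D S ω ≤ D (insert j S) ω := by
  intro k
  induction k using Nat.strong_induction_on with
  | _ k IH =>
    intro S hcard hS j hj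
    set S' := insert j S with hS'def
    have hS' : S'.Nonempty := Finset.insert_nonempty _ _
    -- Pointwise inequality on the union of the H's.
    have ptA : ∀ ω : Ω, (∃ i ∈ S', ω ∈ H i) → D S ω ≤ D S' ω := by
      intro ω hωA
      by_cases hex' : ∃ i ∈ S', ω ∈ E i ∩ H i
      · rw [hsys.eq_one S' hS' ω hex']
        exact ((bounds hsys hE hH hHpos S.card S rfl hS).2 ω).2
      · have hnoE' : ∀ i ∈ S', ω ∈ H i → ω ∉ E i := fun i hi h1 h2 => hex' ⟨i, hi, h2, h1⟩
        have hnoE : ∀ i ∈ S, ω ∈ H i → ω ∉ E i := fun i hi =>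
          hnoE' i (Finset.mem_insert_of_mem hi)
        rw [Dval hsys S hS ω hnoE, Dval hsys S' hS' ω hnoE']
        rw [hS'def, Tof_insert S j ω]
        by_cases hjH : ω ∈ H j
        · simp [hjH]
        · rw [if_pos hjH]
          have hjT : j ∉ Tof H S ω := fun h => hj (Tof_subset S ω h)
          have hne' : insert j (Tof H S ω) ≠ ∅ := Finset.insert_ne_empty _ _
          rw [if_neg hne']
          by_cases h0 : Tof H S ω = ∅
          · rw [if_pos h0, h0]
            exact ((bounds hsys hE hH hHpos _ (insert j ∅) rfl
              (Finset.insert_nonempty _ _)).1).1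
          · rw [if_neg h0]
            obtain ⟨i1, hi1, hωH1⟩ := hωA
            have hi1S : i1 ∈ S := by
              rcases Finset.mem_insert.1 hi1 with h | h
              · exact absurd (h ▸ hωH1) hjH
              · exact h
            have hTne : Tof H S ω ≠ S := by
              intro hEq
              have : i1 ∈ Tof H S ω := by rw [hEq]; exact hi1S
              exact (mem_Tof.1 this).2 hωH1
            have hlt : (Tof H S ω).card < k :=
              hcard ▸ Finset.card_lt_card ((Tof_subset S ω).ssubset_of_ne hTne)
            exact (IH _ hlt _ rfl (Finset.nonempty_iff_ne_empty.2 h0) j hjT).1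
    -- Notation for the unions of the H's.
    set A := ⋃ i ∈ S, H i with hAdef
    have hAmeas : MeasurableSet A := MeasurableSet.biUnion S.countable_toSet fun i _ => hH i
    set B := H j \ A with hBdef
    have hBmeas : MeasurableSet B := (hH j).diff hAmeas
    have hdisj : Disjoint A B := Set.disjoint_sdiff_right
    have hA'eq : (⋃ i ∈ S', H i) = A ∪ B := by
      rw [hS'def, Finset.set_biUnion_insert, hBdef, Set.union_diff_self, Set.union_comm]
    -- The comparison function f : equals D S on A, y S off A.
    set f : Ω → ℝ := fun ω => if ω ∈ A then D S ω else y S with hfdef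
    have hfle : ∀ ω ∈ A ∪ B, f ω ≤ D S' ω := by
      intro ω hω
      by_cases hωA : ω ∈ A
      · rw [hfdef]; simp only [if_pos hωA]
        obtain ⟨i1, hi1, hωH1⟩ := Set.mem_iUnion₂.1 hωA
        exact ptA ω ⟨i1, Finset.mem_insert_of_mem hi1, hωH1⟩
      · rw [hfdef]; simp only [if_neg hωA]
        have hωB : ω ∈ B := hω.resolve_left hωA
        have hωHj : ω ∈ H j := hωB.1
        by_cases hEj : ω ∈ E j
        · rw [hsys.eq_one S' hS' ω ⟨j, Finset.mem_insert_self j S, hEj, hωHj⟩]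
          exact ((bounds hsys hE hH hHpos S.card S rfl hS).1).2
        · have hnoE' : ∀ i ∈ S', ω ∈ H i → ω ∉ E i := by
            intro i hi h1 h2
            rcases Finset.mem_insert.1 hi with h | h
            · subst h; exact hEj h2
            · exact hωA (Set.mem_biUnion h h1)
          have hTS : Tof H S ω = S :=
            Finset.filter_true_of_mem fun i hi => fun hHi => hωA (Set.mem_biUnion hi hHi)
          rw [Dval hsys S' hS' ω hnoE', hS'def, Tof_insert S j ω,
            if_neg (not_not.2 hωHj), hTS, if_neg hS.ne_empty]
    -- Integrability facts.
    have hintDS'AB : IntegrableOn (D S') (A ∪ B) P := intOn hsys hE hH hHpos S' hS' _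
    have hintfA : IntegrableOn f A P := by
      refine (intOn hsys hE hH hHpos S hS A).congr_fun (fun ω hω => ?_) hAmeas
      rw [hfdef]; simp only [if_pos hω]
    have hintfB : IntegrableOn f B P := by
      refine (integrableOn_const (measure_ne_top P B)
        : IntegrableOn (fun _ => y S) B P).congr_fun (fun ω hω => ?_) hBmeas
      rw [hfdef]; simp only [if_neg hω.2]
    -- Measure facts.
    obtain ⟨i0, hi0⟩ := id hS
    have hPA_pos : 0 < P A :=
      lt_of_lt_of_le (hHpos i0)
        (measure_mono (show H i0 ⊆ A from Set.subset_iUnion₂ (s := fun i _ => H i) i0 hi0))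
    have hPA_toReal_pos : 0 < (P A).toReal :=
      ENNReal.toReal_pos hPA_pos.ne' (measure_ne_top P A)
    have hPAB_pos : 0 < (P (A ∪ B)).toReal := by
      refine ENNReal.toReal_pos ?_ (measure_ne_top P _)
      exact (lt_of_lt_of_le hPA_pos (measure_mono Set.subset_union_left)).ne'
    -- Compute ∫_{A∪B} f = y S * (P (A∪B)).toReal.
    have hintA : ∫ ω in A, D S ω ∂P = y S * (P A).toReal :=
      ((eq_div_iff hPA_toReal_pos.ne').1 (hsys.prevision S hS)).symm
    have hintf : ∫ ω in A ∪ B, f ω ∂P = y S * (P (A ∪ B)).toReal := by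
      rw [setIntegral_union hdisj hBmeas hintfA hintfB]
      have h1 : ∫ ω in A, f ω ∂P = ∫ ω in A, D S ω ∂P := by
        refine setIntegral_congr_fun hAmeas fun ω hω => ?_
        rw [hfdef]; simp only [if_pos hω]
      have h2 : ∫ ω in B, f ω ∂P = y S * (P B).toReal := by
        have : ∫ ω in B, f ω ∂P = ∫ _ in B, y S ∂P := by
          refine setIntegral_congr_fun hBmeas fun ω hω => ?_
          rw [hfdef]; simp only [if_neg hω.2]
        rw [this, setIntegral_const, smul_eq_mul, mul_comm, Measure.real]
      rw [h1, h2, hintA, measure_union hdisj hBmeas,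
        ENNReal.toReal_add (measure_ne_top P A) (measure_ne_top P B), mul_add]
    -- The prevision inequality.
    have hymain : y S ≤ y S' := by
      rw [hsys.prevision S' hS', hA'eq, le_div_iff₀ hPAB_pos]
      calc y S * (P (A ∪ B)).toReal = ∫ ω in A ∪ B, f ω ∂P := hintf.symm
        _ ≤ ∫ ω in A ∪ B, D S' ω ∂P :=
          setIntegral_mono_on (hintfA.union hintfB) hintDS'AB (hAmeas.union hBmeas) hfle
    refine ⟨hymain, fun ω => ?_⟩
    by_cases hω : ∃ i ∈ S', ω ∈ H i
    · exact ptA ω hω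
    · push_neg at hω
      rw [hsys.eq_off S hS ω fun i hi => hω i (Finset.mem_insert_of_mem hi),
        hsys.eq_off S' hS' ω hω]
      exact hymain

end Stmt10Aux

/-- The disjunction is monotone with respect to adding a conditional event:
for every nonempty `S ⊆ {1,…,n}`, every `j ∈ {1,…,n}` with `j ∉ S`, and every `ω ∈ Ω`,
one has `𝒟_{S∪{j}}(ω) ≥ 𝒟_S(ω)`. -/
theorem stmt10 {Ω : Type*} [MeasurableSpace Ω] (P : Measure Ω) [IsProbabilityMeasure P]
    (n : ℕ) (E H : Fin n → Set Ω)
    (hE : ∀ i, MeasurableSet (E i)) (hH : ∀ i, MeasurableSet (H i))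
    (hHpos : ∀ i, 0 < P (H i))
    (D : Finset (Fin n) → Ω → ℝ) (y : Finset (Fin n) → ℝ)
    (hsys : DisjunctionSystem P E H D y) :
    ∀ S : Finset (Fin n), S.Nonempty → ∀ j : Fin n, j ∉ S → ∀ ω : Ω,
      D S ω ≤ D (insert j S) ω := by
  intro S hS j hj ω
  exact (Stmt10Aux.main hsys hE hH hHpos S.card S rfl hS j hj).2 ω
end

section
/- De Morgan's law holds for the conjunction and disjunction of conditional events: with the recursive definitions below, let 𝒟_S be the disjunction built from the family (Eᵢ, Hᵢ), and let 𝒞̄_S be the conjunction built (by the same recursion) from the complemented family (Ω∖Eᵢ, Hᵢ). Then for every nonempty S ⊆ {1,…,n} and every ω ∈ Ω, 𝒟_S(ω) = 1 − 𝒞̄_S(ω); in particular the previsions satisfy y_S + x̄_S = 1, where x̄_S is the prevision of 𝒞̄_S. -/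
open MeasureTheory

open MeasureTheory

open MeasureTheory

/-- De Morgan's law: let `𝒟_S` (with previsions `y_S`) be the disjunction
built from the family `(Eᵢ, Hᵢ)`, and let `𝒞̄_S` (with previsions `x̄_S`) be the conjunction
built, by the same recursion, from the complemented family `(Ω∖Eᵢ, Hᵢ)`.  Then for every
nonempty `S ⊆ {1,…,n}` and every `ω ∈ Ω`, `𝒟_S(ω) = 1 − 𝒞̄_S(ω)`; in particular the
previsions satisfy `y_S + x̄_S = 1`. -/
theorem stmt12 {Ω : Type*} [MeasurableSpace Ω] (P : Measure Ω) [IsProbabilityMeasure P]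
    (n : ℕ) (E H : Fin n → Set Ω)
    (hE : ∀ i, MeasurableSet (E i)) (hH : ∀ i, MeasurableSet (H i))
    (hHpos : ∀ i, 0 < P (H i))
    (D : Finset (Fin n) → Ω → ℝ) (y : Finset (Fin n) → ℝ)
    (Cbar : Finset (Fin n) → Ω → ℝ) (xbar : Finset (Fin n) → ℝ)
    (hD : DisjunctionSystem P E H D y)
    (hCbar : ConjunctionSystem P (fun i => (E i)ᶜ) H Cbar xbar) :
    ∀ S : Finset (Fin n), S.Nonempty →
      (∀ ω : Ω, D S ω = 1 - Cbar S ω) ∧ y S + xbar S = 1 := by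

  classical
  intro S
  induction S using Finset.strongInduction with
  | _ S IH =>
  intro hS
  set U : Set Ω := ⋃ i ∈ S, H i with hUdef
  have hUmeas : MeasurableSet U := S.measurableSet_biUnion (fun i _ => hH i)
  -- pointwise De Morgan on U
  have key : ∀ ω ∈ U, D S ω = 1 - Cbar S ω := by
    intro ω hω
    by_cases hA : ∃ i ∈ S, ω ∈ E i ∩ H i
    · rw [hD.eq_one S hS ω hA, hCbar.eq_zero S hS ω ?_]
      · ring
      · obtain ⟨i, hiS, hiE, hiH⟩ := hA
        exact ⟨i, hiS, hiH, by simpa using hiE⟩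
    · push_neg at hA
      set T : Finset (Fin n) := S.filter (fun i => ω ∉ H i) with hT
      have hTS : T ⊆ S := Finset.filter_subset _ _
      obtain ⟨i0, hi0S, hi0H⟩ : ∃ i ∈ S, ω ∈ H i := by
        simpa [hUdef, Set.mem_iUnion] using hω
      have hi0T : i0 ∉ T := by simp [hT, hi0H]
      have hTne : T ≠ S := fun h => hi0T (h ▸ hi0S)
      have hmem : ∀ i ∈ S, (i ∈ T ↔ ω ∉ H i) := by
        intro i hi; simp [hT, hi]
      have hgood : ∀ i ∈ S, i ∉ T → ω ∈ H i ∧ ω ∉ E i := by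
        intro i hi hiT
        have hωH : ω ∈ H i := by
          by_contra h; exact hiT (by simp [hT, hi, h])
        exact ⟨hωH, fun hE' => hA i hi ⟨hE', hωH⟩⟩
      by_cases hTe : T.Nonempty
      · have hDy : D S ω = y T := hD.eq_part S hS ω T hTS hTe hTne hmem hgood
        have hCx : Cbar S ω = xbar T :=
          hCbar.eq_part S hS ω T hTS hTe hTne hmem (fun i hi hiT =>
            ⟨(hgood i hi hiT).2, (hgood i hi hiT).1⟩)
        have hIH := (IH T (Finset.ssubset_iff_subset_ne.mpr ⟨hTS, hTne⟩) hTe).2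
        rw [hDy, hCx]; linarith
      · have hTempty : T = ∅ := Finset.not_nonempty_iff_eq_empty.mp hTe
        have hall : ∀ i ∈ S, ω ∈ H i ∧ ω ∉ E i := fun i hi =>
          hgood i hi (by simp [hTempty])
        rw [hD.eq_zero S hS ω hall, hCbar.eq_one S hS ω (fun i hi =>
          ⟨(hall i hi).2, (hall i hi).1⟩)]
        ring
  have hUpos : 0 < (P U).toReal := by
    obtain ⟨i0, hi0⟩ := hS
    have h1 : 0 < P U :=
      lt_of_lt_of_le (hHpos i0) (measure_mono (Set.subset_biUnion_of_mem hi0))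
    exact ENNReal.toReal_pos h1.ne' (measure_ne_top P U)
  -- the auxiliary measurable version of Cbar S on U
  set A : Set Ω := ⋃ i ∈ S, (H i ∩ E i) with hAdef
  have hAmeas : MeasurableSet A := S.measurableSet_biUnion (fun i _ => (hH i).inter (hE i))
  set W : Finset (Fin n) → Set Ω := fun T => ⋂ i ∈ S, (if i ∈ T then (H i)ᶜ else H i)
    with hWdef
  have hWmeas : ∀ T, MeasurableSet (W T) := fun T =>
    S.measurableSet_biInter (fun i _ => by
      by_cases h : i ∈ T <;> simp [h, (hH i).compl, hH i])
  set c : Finset (Fin n) → ℝ := fun T => if T.Nonempty then xbar T else 1 with hcdef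
  set g : Ω → ℝ := fun ω =>
    if ω ∈ A then 0 else ∑ T ∈ S.powerset, (W T).indicator (fun _ => c T) ω with hgdef
  have hgmeas : Measurable g := by
    apply Measurable.ite hAmeas measurable_const
    exact Finset.measurable_sum _ (fun T _ => measurable_const.indicator (hWmeas T))
  have hgbd : ∀ ω, ‖g ω‖ ≤ 1 + ∑ T ∈ S.powerset, |c T| := by
    intro ω
    have hsum : (0:ℝ) ≤ ∑ T ∈ S.powerset, |c T| := Finset.sum_nonneg fun T _ => abs_nonneg _
    by_cases h : ω ∈ A
    · simp only [hgdef, if_pos h, norm_zero]; linarith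
    · simp only [hgdef, if_neg h, Real.norm_eq_abs]
      calc |∑ T ∈ S.powerset, (W T).indicator (fun _ => c T) ω|
          ≤ ∑ T ∈ S.powerset, |(W T).indicator (fun _ => c T) ω| :=
            Finset.abs_sum_le_sum_abs _ _
        _ ≤ ∑ T ∈ S.powerset, |c T| := Finset.sum_le_sum fun T _ => by
            by_cases hw : ω ∈ W T <;> simp [Set.indicator, hw, abs_nonneg]
        _ ≤ 1 + ∑ T ∈ S.powerset, |c T| := by linarith
  have hgC : ∀ ω ∈ U, Cbar S ω = g ω := by
    intro ω hω
    by_cases hA' : ω ∈ A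
    · have hz : ∃ i ∈ S, ω ∈ H i ∧ ω ∉ (E i)ᶜ := by
        simp only [hAdef, Set.mem_iUnion, Set.mem_inter_iff, exists_prop] at hA'
        obtain ⟨i, hi, h1, h2⟩ := hA'
        exact ⟨i, hi, h1, by simpa using h2⟩
      rw [hCbar.eq_zero S hS ω hz]
      simp [hgdef, hA']
    · set T0 : Finset (Fin n) := S.filter (fun i => ω ∉ H i) with hT0
      have hT0P : T0 ∈ S.powerset := Finset.mem_powerset.mpr (Finset.filter_subset _ _)
      have hT0S : T0 ⊆ S := Finset.filter_subset _ _
      have hωW : ω ∈ W T0 := by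
        simp only [hWdef, Set.mem_iInter]
        intro i hi
        by_cases hh : ω ∈ H i <;> simp [hT0, hi, hh]
      have huniq : ∀ T ∈ S.powerset, ω ∈ W T → T = T0 := by
        intro T hT hωT
        have hTsub := Finset.mem_powerset.mp hT
        simp only [hWdef, Set.mem_iInter] at hωT
        ext i
        simp only [hT0, Finset.mem_filter]
        constructor
        · intro hiT
          have hiS : i ∈ S := hTsub hiT
          have := hωT i hiS
          rw [if_pos hiT] at this
          exact ⟨hiS, this⟩
        · rintro ⟨hiS, hiH⟩
          by_contra hiT
          have := hωT i hiS
          rw [if_neg hiT] at this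
          exact hiH this
      have hsum : ∑ T ∈ S.powerset, (W T).indicator (fun _ => c T) ω = c T0 := by
        rw [Finset.sum_eq_single T0]
        · simp [Set.indicator, hωW]
        · intro T hT hne
          have hnw : ω ∉ W T := fun h => hne (huniq T hT h)
          simp [Set.indicator, hnw]
        · intro h; exact absurd hT0P h
      have hgω : g ω = c T0 := by simp [hgdef, hA', hsum]
      -- now compute Cbar S ω
      have hnoE : ∀ i ∈ S, ω ∈ H i → ω ∉ E i := by
        intro i hi hiH hiE
        exact hA' (by
          simp only [hAdef, Set.mem_iUnion, Set.mem_inter_iff, exists_prop]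
          exact ⟨i, hi, hiH, hiE⟩)
      obtain ⟨i0, hi0S, hi0H⟩ : ∃ i ∈ S, ω ∈ H i := by
        simpa [hUdef, Set.mem_iUnion] using hω
      have hi0T : i0 ∉ T0 := by simp [hT0, hi0H]
      have hT0ne : T0 ≠ S := fun h => hi0T (h ▸ hi0S)
      have hmem : ∀ i ∈ S, (i ∈ T0 ↔ ω ∉ H i) := by
        intro i hi; simp [hT0, hi]
      have hgood : ∀ i ∈ S, i ∉ T0 → ω ∈ (E i)ᶜ ∩ H i := by
        intro i hi hiT
        have hωH : ω ∈ H i := by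
          by_contra h; exact hiT (by simp [hT0, hi, h])
        exact ⟨hnoE i hi hωH, hωH⟩
      by_cases hTe : T0.Nonempty
      · rw [hCbar.eq_part S hS ω T0 hT0S hTe hT0ne hmem hgood, hgω, hcdef]
        simp [hTe]
      · have hTempty : T0 = ∅ := Finset.not_nonempty_iff_eq_empty.mp hTe
        rw [hCbar.eq_one S hS ω (fun i hi => hgood i hi (by simp [hTempty])), hgω, hcdef]
        simp [hTe]
  have hgint : Integrable g (P.restrict U) :=
    (integrable_const (1 + ∑ T ∈ S.powerset, |c T|)).mono'
      hgmeas.aestronglyMeasurable (Filter.Eventually.of_forall hgbd)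
  have hCint : IntegrableOn (Cbar S) U P :=
    hgint.congr ((ae_restrict_iff' hUmeas).mpr
      (Filter.Eventually.of_forall fun ω hω => (hgC ω hω).symm))
  have hDeq : ∫ ω in U, D S ω ∂P = ∫ ω in U, (1 - Cbar S ω) ∂P :=
    setIntegral_congr_fun hUmeas (fun ω hω => key ω hω)
  have hsplit : ∫ ω in U, (1 - Cbar S ω) ∂P = (P U).toReal - ∫ ω in U, Cbar S ω ∂P := by
    rw [integral_sub (integrable_const 1) hCint]
    simp; rfl
  have hsum1 : y S + xbar S = 1 := by
    have hy := hD.prevision S hS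
    have hx := hCbar.prevision S hS
    rw [hy, hx, hDeq, hsplit]
    rw [← hUdef]
    field_simp [hUpos.ne']
    ring
  refine ⟨fun ω => ?_, hsum1⟩
  by_cases hω : ω ∈ U
  · exact key ω hω
  · have hω' : ∀ i ∈ S, ω ∉ H i := fun i hi h => hω (Set.mem_biUnion hi h)
    rw [hD.eq_off S hS ω hω', hCbar.eq_off S hS ω hω']
    linarith
end

section
/- Let X, Y be integrable random variables and H, K events with P(H) > 0 and P(K) > 0; put μ := P(X|H) and ν := P(Y|K). If X(ω)·1_H(ω) + μ·1_{Hᶜ}(ω) = Y(ω)·1_K(ω) + ν·1_{Kᶜ}(ω) for every ω ∈ H ∪ K, then μ = ν, and consequently X·1_H + μ·1_{Hᶜ} = Y·1_K + ν·1_{Kᶜ} at every point of Ω. -/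
open MeasureTheory

lemma stmt13_aux {Ω : Type*} [MeasurableSpace Ω] (P : Measure Ω) [IsProbabilityMeasure P]
    (X : Ω → ℝ) (hX : Integrable X P) (H S : Set Ω) (hH : MeasurableSet H)
    (hS : MeasurableSet S) (hHS : H ⊆ S) (hHpos : 0 < P H) (μ : ℝ)
    (hμ : μ = (∫ ω in H, X ω ∂P) / (P H).toReal) :
    ∫ ω in S, (X ω * H.indicator (1 : Ω → ℝ) ω + μ * Hᶜ.indicator (1 : Ω → ℝ) ω) ∂P
      = μ * (P S).toReal := by
  have hPH : (0:ℝ) < (P H).toReal := ENNReal.toReal_pos hHpos.ne' (measure_ne_top P H)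
  have hfun : ∀ ω, X ω * H.indicator (1 : Ω → ℝ) ω + μ * Hᶜ.indicator (1 : Ω → ℝ) ω
      = H.indicator X ω + Hᶜ.indicator (fun _ => μ) ω := by
    intro ω
    by_cases hω : ω ∈ H <;> simp [hω, Set.indicator_of_mem, Set.indicator_of_notMem]
  simp_rw [hfun]
  rw [integral_add ((hX.indicator hH).integrableOn)
      (((integrable_const μ).indicator hH.compl).integrableOn),
    setIntegral_indicator hH, setIntegral_indicator hH.compl, setIntegral_const,
    Set.inter_eq_right.mpr hHS]
  have hIX : ∫ ω in H, X ω ∂P = μ * (P H).toReal := by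
    rw [hμ]; field_simp
  have hmeas : P H + P (S ∩ Hᶜ) = P S := by
    have := measure_inter_add_diff (μ := P) S hH
    rw [Set.inter_eq_right.mpr hHS] at this
    rw [Set.diff_eq] at this
    exact this
  have htr : (P H).toReal + (P (S ∩ Hᶜ)).toReal = (P S).toReal := by
    rw [← ENNReal.toReal_add (measure_ne_top P _) (measure_ne_top P _), hmeas]
  rw [hIX, smul_eq_mul, measureReal_def]
  linear_combination μ * htr

/-- Let `X, Y` be integrable random variables and `H, K` events with
`P(H) > 0`, `P(K) > 0`; put `μ := P(X|H) = E[X·1_H]/P(H)` and `ν := P(Y|K) = E[Y·1_K]/P(K)`.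
If `X(ω)·1_H(ω) + μ·1_{Hᶜ}(ω) = Y(ω)·1_K(ω) + ν·1_{Kᶜ}(ω)` for every `ω ∈ H ∪ K`, then
`μ = ν`, and consequently `X·1_H + μ·1_{Hᶜ} = Y·1_K + ν·1_{Kᶜ}` at every point of `Ω`. -/
theorem stmt13 {Ω : Type*} [MeasurableSpace Ω] (P : Measure Ω) [IsProbabilityMeasure P]
    (X Y : Ω → ℝ) (hX : Integrable X P) (hY : Integrable Y P)
    (H K : Set Ω) (hH : MeasurableSet H) (hK : MeasurableSet K)
    (hHpos : 0 < P H) (hKpos : 0 < P K)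
    (μ ν : ℝ)
    (hμ : μ = (∫ ω in H, X ω ∂P) / (P H).toReal)
    (hν : ν = (∫ ω in K, Y ω ∂P) / (P K).toReal)
    (h : ∀ ω ∈ H ∪ K,
      X ω * H.indicator (1 : Ω → ℝ) ω + μ * Hᶜ.indicator (1 : Ω → ℝ) ω =
        Y ω * K.indicator (1 : Ω → ℝ) ω + ν * Kᶜ.indicator (1 : Ω → ℝ) ω) :
    μ = ν ∧ ∀ ω : Ω,
      X ω * H.indicator (1 : Ω → ℝ) ω + μ * Hᶜ.indicator (1 : Ω → ℝ) ω =
        Y ω * K.indicator (1 : Ω → ℝ) ω + ν * Kᶜ.indicator (1 : Ω → ℝ) ω := by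
  have hU : MeasurableSet (H ∪ K) := hH.union hK
  have hUpos : 0 < P (H ∪ K) := lt_of_lt_of_le hHpos (measure_mono Set.subset_union_left)
  have hcU : (0:ℝ) < (P (H ∪ K)).toReal := ENNReal.toReal_pos hUpos.ne' (measure_ne_top P _)
  have e1 := stmt13_aux P X hX H (H ∪ K) hH hU Set.subset_union_left hHpos μ hμ
  have e2 := stmt13_aux P Y hY K (H ∪ K) hK hU Set.subset_union_right hKpos ν hν
  have heq : ∫ ω in H ∪ K, (X ω * H.indicator (1 : Ω → ℝ) ω + μ * Hᶜ.indicator (1 : Ω → ℝ) ω) ∂P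
      = ∫ ω in H ∪ K, (Y ω * K.indicator (1 : Ω → ℝ) ω + ν * Kᶜ.indicator (1 : Ω → ℝ) ω) ∂P :=
    setIntegral_congr_fun hU h
  rw [e1, e2] at heq
  have hμν : μ = ν := by
    have := mul_right_cancel₀ hcU.ne' heq
    exact this
  refine ⟨hμν, fun ω => ?_⟩
  by_cases hω : ω ∈ H ∪ K
  · exact h ω hω
  · have hωH : ω ∉ H := fun hh => hω (Or.inl hh)
    have hωK : ω ∉ K := fun hh => hω (Or.inr hh)
    simp [hωH, hωK, hμν]
end

section
/- Let X, Y be integrable random variables and H, K events with P(H) > 0 and P(K) > 0; put μ := P(X|H) and ν := P(Y|K). If X(ω)·1_H(ω) + μ·1_{Hᶜ}(ω) ≤ Y(ω)·1_K(ω) + ν·1_{Kᶜ}(ω) for every ω ∈ H ∪ K, then μ ≤ ν, and consequently X·1_H + μ·1_{Hᶜ} ≤ Y·1_K + ν·1_{Kᶜ} at every point of Ω. -/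
open MeasureTheory


lemma stmt14_aux {Ω : Type*} [MeasurableSpace Ω] (P : Measure Ω) [IsProbabilityMeasure P]
    (Z : Ω → ℝ) (hZ : Integrable Z P) (A S : Set Ω) (hA : MeasurableSet A)
    (hS : MeasurableSet S) (hAS : A ⊆ S) (c : ℝ)
    (hc : ∫ ω in A, Z ω ∂P = c * (P A).toReal) :
    ∫ ω in S, (Z ω * A.indicator (1 : Ω → ℝ) ω + c * Aᶜ.indicator (1 : Ω → ℝ) ω) ∂P
      = c * (P S).toReal := by
  have hfun : ∀ ω, Z ω * A.indicator (1 : Ω → ℝ) ω + c * Aᶜ.indicator (1 : Ω → ℝ) ω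
      = A.indicator Z ω + Aᶜ.indicator (fun _ => c) ω := by
    intro ω
    by_cases hω : ω ∈ A <;> simp [Set.indicator_of_mem, Set.indicator_of_notMem, hω]
  simp_rw [hfun]
  rw [integral_add ((hZ.indicator hA).integrableOn)
      ((integrable_const c).indicator hA.compl |>.integrableOn),
    setIntegral_indicator hA, setIntegral_indicator hA.compl,
    Set.inter_eq_self_of_subset_right hAS, setIntegral_const, smul_eq_mul, hc]
  have hsplit : P A + P (S ∩ Aᶜ) = P S := by
    rw [← measure_union (Disjoint.mono_right Set.inter_subset_right disjoint_compl_right) (hS.inter hA.compl)]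
    congr 1
    rw [Set.union_inter_distrib_left, Set.union_compl_self, Set.inter_univ,
      Set.union_eq_self_of_subset_left hAS]
  have := congrArg ENNReal.toReal hsplit
  rw [ENNReal.toReal_add (measure_ne_top P A) (measure_ne_top P _)] at this
  rw [mul_comm (P.real (S ∩ Aᶜ)) c, ← mul_add]
  exact congrArg (c * ·) this



/-- Let `X, Y` be integrable random variables and `H, K` events with
`P(H) > 0`, `P(K) > 0`; put `μ := P(X|H) = E[X·1_H]/P(H)` and `ν := P(Y|K) = E[Y·1_K]/P(K)`.
If `X(ω)·1_H(ω) + μ·1_{Hᶜ}(ω) ≤ Y(ω)·1_K(ω) + ν·1_{Kᶜ}(ω)` for every `ω ∈ H ∪ K`, then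
`μ ≤ ν`, and consequently `X·1_H + μ·1_{Hᶜ} ≤ Y·1_K + ν·1_{Kᶜ}` at every point of `Ω`. -/
theorem stmt14 {Ω : Type*} [MeasurableSpace Ω] (P : Measure Ω) [IsProbabilityMeasure P]
    (X Y : Ω → ℝ) (hX : Integrable X P) (hY : Integrable Y P)
    (H K : Set Ω) (hH : MeasurableSet H) (hK : MeasurableSet K)
    (hHpos : 0 < P H) (hKpos : 0 < P K)
    (μ ν : ℝ)
    (hμ : μ = (∫ ω in H, X ω ∂P) / (P H).toReal)
    (hν : ν = (∫ ω in K, Y ω ∂P) / (P K).toReal)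
    (h : ∀ ω ∈ H ∪ K,
      X ω * H.indicator (1 : Ω → ℝ) ω + μ * Hᶜ.indicator (1 : Ω → ℝ) ω ≤
        Y ω * K.indicator (1 : Ω → ℝ) ω + ν * Kᶜ.indicator (1 : Ω → ℝ) ω) :
    μ ≤ ν ∧ ∀ ω : Ω,
      X ω * H.indicator (1 : Ω → ℝ) ω + μ * Hᶜ.indicator (1 : Ω → ℝ) ω ≤
        Y ω * K.indicator (1 : Ω → ℝ) ω + ν * Kᶜ.indicator (1 : Ω → ℝ) ω := by
  have hS : MeasurableSet (H ∪ K) := hH.union hK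
  have hPHr : (0:ℝ) < (P H).toReal :=
    ENNReal.toReal_pos hHpos.ne' (measure_ne_top P H)
  have hPKr : (0:ℝ) < (P K).toReal :=
    ENNReal.toReal_pos hKpos.ne' (measure_ne_top P K)
  have hPSr : (0:ℝ) < (P (H ∪ K)).toReal :=
    ENNReal.toReal_pos (lt_of_lt_of_le hHpos (measure_mono Set.subset_union_left)).ne'
      (measure_ne_top P _)
  have hcH : ∫ ω in H, X ω ∂P = μ * (P H).toReal := by
    rw [hμ]; field_simp
  have hcK : ∫ ω in K, Y ω ∂P = ν * (P K).toReal := by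
    rw [hν]; field_simp
  have hIf : IntegrableOn (fun ω => X ω * H.indicator (1 : Ω → ℝ) ω
      + μ * Hᶜ.indicator (1 : Ω → ℝ) ω) (H ∪ K) P := by
    apply Integrable.integrableOn
    have : (fun ω => X ω * H.indicator (1 : Ω → ℝ) ω + μ * Hᶜ.indicator (1 : Ω → ℝ) ω)
        = fun ω => H.indicator X ω + Hᶜ.indicator (fun _ => μ) ω := by
      funext ω; by_cases hω : ω ∈ H <;> simp [hω]
    rw [this]
    exact (hX.indicator hH).add ((integrable_const μ).indicator hH.compl)
  have hIg : IntegrableOn (fun ω => Y ω * K.indicator (1 : Ω → ℝ) ω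
      + ν * Kᶜ.indicator (1 : Ω → ℝ) ω) (H ∪ K) P := by
    apply Integrable.integrableOn
    have : (fun ω => Y ω * K.indicator (1 : Ω → ℝ) ω + ν * Kᶜ.indicator (1 : Ω → ℝ) ω)
        = fun ω => K.indicator Y ω + Kᶜ.indicator (fun _ => ν) ω := by
      funext ω; by_cases hω : ω ∈ K <;> simp [hω]
    rw [this]
    exact (hY.indicator hK).add ((integrable_const ν).indicator hK.compl)
  have hmono := setIntegral_mono_on hIf hIg hS h
  rw [stmt14_aux P X hX H (H ∪ K) hH hS Set.subset_union_left μ hcH,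
    stmt14_aux P Y hY K (H ∪ K) hK hS Set.subset_union_right ν hcK] at hmono
  have hμν : μ ≤ ν := le_of_mul_le_mul_right hmono hPSr
  refine ⟨hμν, fun ω => ?_⟩
  by_cases hω : ω ∈ H ∪ K
  · exact h ω hω
  · rw [Set.mem_union] at hω; push_neg at hω
    simp [Set.indicator_of_notMem hω.1, Set.indicator_of_notMem hω.2,
      Set.indicator_of_mem (Set.mem_compl hω.1), Set.indicator_of_mem (Set.mem_compl hω.2), hμν]
end

section
/- With the recursive definition of the conjunctions 𝒞_S and previsions x_S below, the Fréchet–Hoeffding bounds hold at each step of conjoining one more conditional event: for every nonempty S ⊆ {1,…,n} and every j ∈ {1,…,n} with j ∉ S, one has max{x_S + x_{{j}} − 1, 0} ≤ x_{S∪{j}} ≤ min{x_S, x_{{j}}}, where x_{{j}} = P(Eⱼ|Hⱼ). -/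
open MeasureTheory

open MeasureTheory

open scoped Classical

namespace Stmt15Aux

variable {Ω : Type*} [MeasurableSpace Ω] {P : Measure Ω}
  {n : ℕ} {E H : Fin n → Set Ω} {C : Finset (Fin n) → Ω → ℝ} {x : Finset (Fin n) → ℝ}

/-- extended prevision with value 1 on the empty set -/
noncomputable def xP (x : Finset (Fin n) → ℝ) (T : Finset (Fin n)) : ℝ :=
  if T = ∅ then 1 else x T

/-- value of `C S` at any point where no `H i \ E i` occurs -/
lemma C_val (hsys : ConjunctionSystem P E H C x) (S : Finset (Fin n)) (hS : S.Nonempty)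
    (ω : Ω) (hbad : ∀ i ∈ S, ω ∈ H i → ω ∈ E i) :
    C S ω = xP x (S.filter fun i => ω ∉ H i) := by
  set T := S.filter fun i => ω ∉ H i with hT
  by_cases h0 : T = ∅
  · rw [xP, if_pos h0]
    apply hsys.eq_one S hS
    intro i hi
    have hHi : ω ∈ H i := by
      by_contra h
      have : i ∈ T := Finset.mem_filter.2 ⟨hi, h⟩
      simp [h0] at this
    exact ⟨hbad i hi hHi, hHi⟩
  · rw [xP, if_neg h0]
    by_cases hTS : T = S
    · have h1 : C S ω = x S := hsys.eq_off S hS ω (fun i hi => by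
        have hiT : i ∈ T := hTS ▸ hi
        exact (Finset.mem_filter.1 hiT).2)
      rw [h1, hTS]
    · refine hsys.eq_part S hS ω T (Finset.filter_subset _ _)
        (Finset.nonempty_iff_ne_empty.2 h0) hTS
        (fun i hi => by simp [hT, Finset.mem_filter, hi])
        (fun i hi hiT => ?_)
      have hHi : ω ∈ H i := by
        by_contra h
        exact hiT (Finset.mem_filter.2 ⟨hi, h⟩)
      exact ⟨hbad i hi hHi, hHi⟩

/-- the measurable piece on which `C S = xP x T` -/
def Aset (E H : Fin n → Set Ω) (S T : Finset (Fin n)) : Set Ω :=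
  (⋂ i ∈ T, (H i)ᶜ) ∩ ⋂ i ∈ S \ T, (E i ∩ H i)

lemma Aset_meas (hE : ∀ i, MeasurableSet (E i)) (hH : ∀ i, MeasurableSet (H i))
    (S T : Finset (Fin n)) : MeasurableSet (Aset E H S T) :=
  (T.measurableSet_biInter (fun i _ => (hH i).compl)).inter
    ((S \ T).measurableSet_biInter (fun i _ => (hE i).inter (hH i)))

lemma C_repr (hsys : ConjunctionSystem P E H C x) (S : Finset (Fin n)) (hS : S.Nonempty)
    (ω : Ω) :
    C S ω = ∑ T ∈ S.powerset, (Aset E H S T).indicator (fun _ => xP x T) ω := by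
  by_cases hbad : ∃ i ∈ S, ω ∈ H i ∧ ω ∉ E i
  · rw [hsys.eq_zero S hS ω hbad]
    obtain ⟨i, hiS, hHi, hEi⟩ := hbad
    symm
    apply Finset.sum_eq_zero
    intro T hT
    apply Set.indicator_of_notMem
    rintro ⟨h1, h2⟩
    by_cases hiT : i ∈ T
    · exact absurd hHi (by simpa using Set.mem_iInter₂.1 h1 i hiT)
    · exact hEi (Set.mem_iInter₂.1 h2 i (Finset.mem_sdiff.2 ⟨hiS, hiT⟩)).1
  · push_neg at hbad
    rw [C_val hsys S hS ω hbad]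
    set T₀ := S.filter fun i => ω ∉ H i with hT₀
    rw [Finset.sum_eq_single_of_mem T₀ (Finset.mem_powerset.2 (Finset.filter_subset _ _))]
    · rw [Set.indicator_of_mem]
      refine ⟨Set.mem_iInter₂.2 fun i hi => (Finset.mem_filter.1 hi).2,
        Set.mem_iInter₂.2 fun i hi => ?_⟩
      obtain ⟨hiS, hiT⟩ := Finset.mem_sdiff.1 hi
      have hHi : ω ∈ H i := by
        by_contra h
        exact hiT (Finset.mem_filter.2 ⟨hiS, h⟩)
      exact ⟨hbad i hiS hHi, hHi⟩
    · intro T hT hne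
      apply Set.indicator_of_notMem
      rintro ⟨h1, h2⟩
      apply hne
      ext i
      simp only [hT₀, Finset.mem_filter]
      constructor
      · intro hiT
        exact ⟨Finset.mem_powerset.1 hT hiT, by simpa using Set.mem_iInter₂.1 h1 i hiT⟩
      · rintro ⟨hiS, hHi⟩
        by_contra hiT
        exact hHi (Set.mem_iInter₂.1 h2 i (Finset.mem_sdiff.2 ⟨hiS, hiT⟩)).2

lemma C_meas (hsys : ConjunctionSystem P E H C x)
    (hE : ∀ i, MeasurableSet (E i)) (hH : ∀ i, MeasurableSet (H i))
    (S : Finset (Fin n)) (hS : S.Nonempty) : Measurable (C S) := by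
  have : C S = fun ω => ∑ T ∈ S.powerset, (Aset E H S T).indicator (fun _ => xP x T) ω :=
    funext fun ω => C_repr hsys S hS ω
  rw [this]
  exact Finset.measurable_sum _ fun T _ =>
    (measurable_const.indicator (Aset_meas hE hH S T))

lemma C_intgr (hsys : ConjunctionSystem P E H C x)
    (hE : ∀ i, MeasurableSet (E i)) (hH : ∀ i, MeasurableSet (H i))
    [IsFiniteMeasure P]
    (S : Finset (Fin n)) (hS : S.Nonempty) : Integrable (C S) P := by
  have : C S = fun ω => ∑ T ∈ S.powerset, (Aset E H S T).indicator (fun _ => xP x T) ω :=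
    funext fun ω => C_repr hsys S hS ω
  rw [this]
  exact integrable_finset_sum _ fun T _ =>
    (integrable_const _).indicator (Aset_meas hE hH S T)

lemma D_meas (hH : ∀ i, MeasurableSet (H i)) (S : Finset (Fin n)) :
    MeasurableSet (⋃ i ∈ S, H i) :=
  S.measurableSet_biUnion (fun i _ => hH i)

lemma D_pos (hHpos : ∀ i, 0 < P (H i)) [IsFiniteMeasure P]
    (S : Finset (Fin n)) (hS : S.Nonempty) : 0 < (P (⋃ i ∈ S, H i)).toReal := by
  obtain ⟨i, hi⟩ := hS
  have h1 : 0 < P (⋃ i ∈ S, H i) :=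
    lt_of_lt_of_le (hHpos i) (measure_mono (Set.subset_biUnion_of_mem hi))
  exact ENNReal.toReal_pos h1.ne' (measure_ne_top P _)

lemma bdd (hsys : ConjunctionSystem P E H C x)
    (hE : ∀ i, MeasurableSet (E i)) (hH : ∀ i, MeasurableSet (H i))
    (hHpos : ∀ i, 0 < P (H i)) [IsProbabilityMeasure P] :
    ∀ S : Finset (Fin n), S.Nonempty →
      (0 ≤ x S ∧ x S ≤ 1) ∧ ∀ ω, 0 ≤ C S ω ∧ C S ω ≤ 1 := by
  intro S
  induction S using Finset.strongInduction with
  | _ S ih =>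
  intro hS
  -- values of C S at points of the union are 0, 1 or x T for T ⊊ S
  have hpoint : ∀ ω ∈ (⋃ i ∈ S, H i), 0 ≤ C S ω ∧ C S ω ≤ 1 := by
    intro ω hω
    by_cases hbad : ∃ i ∈ S, ω ∈ H i ∧ ω ∉ E i
    · rw [hsys.eq_zero S hS ω hbad]; norm_num
    · push_neg at hbad
      rw [C_val hsys S hS ω hbad]
      set T₀ := S.filter fun i => ω ∉ H i with hT₀
      by_cases h0 : T₀ = ∅
      · rw [xP, if_pos h0]; norm_num
      · rw [xP, if_neg h0]
        obtain ⟨i, hiS, hHi⟩ : ∃ i ∈ S, ω ∈ H i := by simpa using hω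
        have hss : T₀ ⊂ S := by
          refine Finset.ssubset_iff_subset_ne.2 ⟨Finset.filter_subset _ _, fun h => ?_⟩
          have : i ∈ T₀ := h ▸ hiS
          exact (Finset.mem_filter.1 this).2 hHi
        exact (ih T₀ hss (Finset.nonempty_iff_ne_empty.2 h0)).1
  have hDm := D_meas hH S
  have hden := D_pos hHpos S hS
  have hint := (C_intgr hsys hE hH S hS).integrableOn (s := ⋃ i ∈ S, H i)
  have hnum1 : 0 ≤ ∫ ω in ⋃ i ∈ S, H i, C S ω ∂P :=
    setIntegral_nonneg hDm fun ω hω => (hpoint ω hω).1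
  have hnum2 : (∫ ω in ⋃ i ∈ S, H i, C S ω ∂P) ≤ (P (⋃ i ∈ S, H i)).toReal := by
    have := setIntegral_mono_on hint ((integrable_const (1:ℝ)).integrableOn) hDm
      (fun ω hω => (hpoint ω hω).2)
    simpa [Measure.real] using this
  have hxS : 0 ≤ x S ∧ x S ≤ 1 := by
    rw [hsys.prevision S hS]
    exact ⟨div_nonneg hnum1 hden.le, (div_le_one hden).2 hnum2⟩
  refine ⟨hxS, fun ω => ?_⟩
  by_cases hbad : ∃ i ∈ S, ω ∈ H i ∧ ω ∉ E i
  · rw [hsys.eq_zero S hS ω hbad]; norm_num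
  · push_neg at hbad
    rw [C_val hsys S hS ω hbad]
    set T₀ := S.filter fun i => ω ∉ H i with hT₀
    by_cases h0 : T₀ = ∅
    · rw [xP, if_pos h0]; norm_num
    · rw [xP, if_neg h0]
      by_cases hTS : T₀ = S
      · rw [hTS]; exact hxS
      · exact (ih T₀ (Finset.ssubset_iff_subset_ne.2 ⟨Finset.filter_subset _ _, hTS⟩)
          (Finset.nonempty_iff_ne_empty.2 h0)).1

lemma xP_bdd (hsys : ConjunctionSystem P E H C x)
    (hE : ∀ i, MeasurableSet (E i)) (hH : ∀ i, MeasurableSet (H i))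
    (hHpos : ∀ i, 0 < P (H i)) [IsProbabilityMeasure P]
    (T : Finset (Fin n)) : 0 ≤ xP x T ∧ xP x T ≤ 1 := by
  rw [xP]
  by_cases h : T = ∅
  · rw [if_pos h]; norm_num
  · rw [if_neg h]
    exact (bdd hsys hE hH hHpos T (Finset.nonempty_iff_ne_empty.2 h)).1

lemma extend (hsys : ConjunctionSystem P E H C x)
    (hE : ∀ i, MeasurableSet (E i)) (hH : ∀ i, MeasurableSet (H i))
    (hHpos : ∀ i, 0 < P (H i)) [IsProbabilityMeasure P]
    (S : Finset (Fin n)) (hS : S.Nonempty) (V : Set Ω) (hV : MeasurableSet V)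
    (hsub : (⋃ i ∈ S, H i) ⊆ V) :
    ∫ ω in V, C S ω ∂P = x S * (P V).toReal := by
  set D := ⋃ i ∈ S, H i with hD
  have hDm := D_meas hH S
  have hden := D_pos hHpos S hS
  have hint := C_intgr hsys hE hH S hS
  have h1 : ∫ ω in D, C S ω ∂P = x S * (P D).toReal := by
    have := hsys.prevision S hS
    rw [← hD] at this
    rw [this]
    exact (div_mul_cancel₀ _ hden.ne').symm
  have h2 : ∫ ω in V \ D, C S ω ∂P = x S * (P (V \ D)).toReal := by
    rw [setIntegral_congr_fun (hV.diff hDm) (g := fun _ => x S) ?_, setIntegral_const,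
      smul_eq_mul, mul_comm]
    · rfl
    intro ω hω
    refine hsys.eq_off S hS ω fun i hi => fun hHi => ?_
    exact hω.2 (Set.mem_biUnion hi hHi)
  have hsplit : V = D ∪ (V \ D) := (Set.union_diff_cancel hsub).symm
  have hPV : (P V).toReal = (P D).toReal + (P (V \ D)).toReal := by
    have : P V = P D + P (V \ D) := by
      conv_lhs => rw [hsplit]
      exact measure_union Set.disjoint_sdiff_right (hV.diff hDm)
    rw [this, ENNReal.toReal_add (measure_ne_top P _) (measure_ne_top P _)]
  calc ∫ ω in V, C S ω ∂P
      = ∫ ω in D ∪ (V \ D), C S ω ∂P := by rw [← hsplit]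
    _ = (∫ ω in D, C S ω ∂P) + ∫ ω in V \ D, C S ω ∂P :=
        setIntegral_union Set.disjoint_sdiff_right (hV.diff hDm)
          hint.integrableOn hint.integrableOn
    _ = x S * (P V).toReal := by rw [h1, h2, hPV]; ring

theorem main (hsys : ConjunctionSystem P E H C x)
    (hE : ∀ i, MeasurableSet (E i)) (hH : ∀ i, MeasurableSet (H i))
    (hHpos : ∀ i, 0 < P (H i)) [IsProbabilityMeasure P] :
    ∀ S : Finset (Fin n), S.Nonempty → ∀ j : Fin n, j ∉ S →
      max (x S + x {j} - 1) 0 ≤ x (insert j S) ∧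
        x (insert j S) ≤ min (x S) (x {j}) := by
  intro S
  induction S using Finset.strongInduction with
  | _ S ih =>
  intro hS j hj
  set U := insert j S with hU
  have hUne : U.Nonempty := Finset.insert_nonempty _ _
  have hjne : ({j} : Finset (Fin n)).Nonempty := Finset.singleton_nonempty _
  have hjU : j ∈ U := Finset.mem_insert_self _ _
  have hSU : S ⊆ U := Finset.subset_insert _ _
  set DU := ⋃ i ∈ U, H i with hDU
  have hDUm : MeasurableSet DU := D_meas hH U
  have hden : 0 < (P DU).toReal := D_pos hHpos U hUne
  -- pointwise Fréchet bounds on DU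
  have hpt : ∀ ω ∈ DU, 0 ≤ C U ω ∧ C U ω ≤ C S ω ∧ C U ω ≤ C {j} ω ∧
      C S ω + C {j} ω - 1 ≤ C U ω := by
    intro ω hω
    have hCS01 := (bdd hsys hE hH hHpos S hS).2 ω
    have hCj01 := (bdd hsys hE hH hHpos {j} hjne).2 ω
    have hCU01 := (bdd hsys hE hH hHpos U hUne).2 ω
    by_cases hbad : ∃ i ∈ U, ω ∈ H i ∧ ω ∉ E i
    · have hCU : C U ω = 0 := hsys.eq_zero U hUne ω hbad
      obtain ⟨i, hiU, hHi, hEi⟩ := hbad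
      have hsum : C S ω + C {j} ω - 1 ≤ 0 := by
        rcases Finset.mem_insert.1 hiU with hij | hiS
        · have : C {j} ω = 0 := hsys.eq_zero {j} hjne ω
            ⟨j, Finset.mem_singleton_self j, hij ▸ hHi, hij ▸ hEi⟩
          linarith [hCS01.2]
        · have : C S ω = 0 := hsys.eq_zero S hS ω ⟨i, hiS, hHi, hEi⟩
          linarith [hCj01.2]
      rw [hCU]
      exact ⟨le_refl 0, hCS01.1, hCj01.1, hsum⟩
    · push_neg at hbad
      have hbadS : ∀ i ∈ S, ω ∈ H i → ω ∈ E i := fun i hi => hbad i (hSU hi)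
      have hbadj : ∀ i ∈ ({j} : Finset (Fin n)), ω ∈ H i → ω ∈ E i := fun i hi => by
        rw [Finset.mem_singleton] at hi
        exact hi ▸ hbad j hjU
      rw [C_val hsys U hUne ω hbad, C_val hsys S hS ω hbadS,
        C_val hsys {j} hjne ω hbadj]
      have hTU : U.filter (fun i => ω ∉ H i) =
          if ω ∉ H j then insert j (S.filter (fun i => ω ∉ H i))
          else S.filter (fun i => ω ∉ H i) := Finset.filter_insert _ _ _
      have hTj : ({j} : Finset (Fin n)).filter (fun i => ω ∉ H i) =
          if ω ∉ H j then {j} else ∅ := Finset.filter_singleton _ _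
      set TS := S.filter (fun i => ω ∉ H i) with hTS
      have hTS01 := xP_bdd hsys hE hH hHpos TS
      by_cases hj' : ω ∈ H j
      · rw [hTU, hTj, if_neg (by simpa using hj'), if_neg (by simpa using hj')]
        have : xP x (∅ : Finset (Fin n)) = 1 := if_pos rfl
        rw [this]
        exact ⟨hTS01.1, le_refl _, hTS01.2, by linarith⟩
      · rw [hTU, hTj, if_pos hj', if_pos hj']
        have hxj : xP x {j} = x {j} := if_neg (Finset.singleton_ne_empty j)
        rw [hxj]
        have hxj01 := (bdd hsys hE hH hHpos {j} hjne).1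
        by_cases h0 : TS = ∅
        · rw [h0]
          have h1 : xP x (insert j (∅ : Finset (Fin n))) = x {j} := by
            have : insert j (∅ : Finset (Fin n)) = {j} := rfl
            rw [this]
            exact if_neg (Finset.singleton_ne_empty j)
          have h2 : xP x (∅ : Finset (Fin n)) = 1 := if_pos rfl
          rw [h1, h2]
          exact ⟨hxj01.1, hxj01.2, le_refl _, by linarith⟩
        · have hTSne : TS.Nonempty := Finset.nonempty_iff_ne_empty.2 h0
          have hjTS : j ∉ TS := fun h => hj (Finset.filter_subset _ _ h)
          -- TS is a proper subset of S
          obtain ⟨i, hiU, hHi⟩ : ∃ i ∈ U, ω ∈ H i := by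
            rw [hDU] at hω
            simpa using hω
          have hiS : i ∈ S := by
            rcases Finset.mem_insert.1 hiU with hij | hiS
            · exact absurd (hij ▸ hHi) hj'
            · exact hiS
          have hss : TS ⊂ S := by
            refine Finset.ssubset_iff_subset_ne.2 ⟨Finset.filter_subset _ _, fun h => ?_⟩
            have : i ∈ TS := h ▸ hiS
            exact (Finset.mem_filter.1 this).2 hHi
          have hIH := ih TS hss hTSne j hjTS
          have hIns : xP x (insert j TS) = x (insert j TS) :=
            if_neg (Finset.insert_ne_empty _ _)
          have hTSx : xP x TS = x TS := if_neg h0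
          rw [hIns, hTSx]
          have h1 : x (insert j TS) ≤ x TS := hIH.2.trans (min_le_left _ _)
          have h2 : x (insert j TS) ≤ x {j} := hIH.2.trans (min_le_right _ _)
          have h3 : x TS + x {j} - 1 ≤ x (insert j TS) :=
            (le_max_left _ _).trans hIH.1
          have h4 : (0:ℝ) ≤ x (insert j TS) := (le_max_right _ _).trans hIH.1
          exact ⟨h4, h1, h2, h3⟩
  -- integrals over DU
  have hintU := (C_intgr hsys hE hH U hUne).integrableOn (s := DU)
  have hintS := (C_intgr hsys hE hH S hS).integrableOn (s := DU)
  have hintj := (C_intgr hsys hE hH {j} hjne).integrableOn (s := DU)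
  have hIU : ∫ ω in DU, C U ω ∂P = x U * (P DU).toReal :=
    extend hsys hE hH hHpos U hUne DU hDUm subset_rfl
  have hIS : ∫ ω in DU, C S ω ∂P = x S * (P DU).toReal :=
    extend hsys hE hH hHpos S hS DU hDUm
      (by rw [hDU]; exact Set.iUnion₂_subset fun i hi =>
        Set.subset_biUnion_of_mem (hSU hi))
  have hIj : ∫ ω in DU, C {j} ω ∂P = x {j} * (P DU).toReal :=
    extend hsys hE hH hHpos {j} hjne DU hDUm
      (by rw [hDU]; exact Set.iUnion₂_subset fun i hi =>
        Set.subset_biUnion_of_mem (by rw [Finset.mem_singleton] at hi; exact hi ▸ hjU))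
  have hU1 : x U ≤ x S := by
    have := setIntegral_mono_on hintU hintS hDUm (fun ω hω => (hpt ω hω).2.1)
    rw [hIU, hIS] at this
    exact le_of_mul_le_mul_right this hden
  have hU2 : x U ≤ x {j} := by
    have := setIntegral_mono_on hintU hintj hDUm (fun ω hω => (hpt ω hω).2.2.1)
    rw [hIU, hIj] at this
    exact le_of_mul_le_mul_right this hden
  have hL1 : x S + x {j} - 1 ≤ x U := by
    have hintc : IntegrableOn (fun _ : Ω => (1:ℝ)) DU P := (integrable_const _).integrableOn
    have hadd : IntegrableOn (fun ω => C S ω + C {j} ω) DU P := hintS.add hintj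
    have hcomb : IntegrableOn (fun ω => C S ω + C {j} ω - 1) DU P := hadd.sub hintc
    have hmono := setIntegral_mono_on hcomb hintU hDUm (fun ω hω => (hpt ω hω).2.2.2)
    have hsplit : ∫ ω in DU, (C S ω + C {j} ω - 1) ∂P =
        (∫ ω in DU, C S ω ∂P) + (∫ ω in DU, C {j} ω ∂P) - ∫ _ in DU, (1:ℝ) ∂P := by
      rw [integral_sub hadd hintc, integral_add hintS hintj]
    have hone : ∫ _ in DU, (1:ℝ) ∂P = (P DU).toReal := by simp [Measure.real]
    rw [hsplit, hone, hIU, hIS, hIj] at hmono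
    have : (x S + x {j} - 1) * (P DU).toReal ≤ x U * (P DU).toReal := by linarith
    exact le_of_mul_le_mul_right this hden
  have hL2 : (0:ℝ) ≤ x U := (bdd hsys hE hH hHpos U hUne).1.1
  exact ⟨max_le hL1 hL2, le_min hU1 hU2⟩

end Stmt15Aux

/-- The Fréchet–Hoeffding bounds hold at each step of conjoining one more
conditional event: for every nonempty `S ⊆ {1,…,n}` and every `j ∈ {1,…,n}` with `j ∉ S`,
`max {x_S + x_{{j}} − 1, 0} ≤ x_{S∪{j}} ≤ min {x_S, x_{{j}}}`, where `x_{{j}} = P(Eⱼ|Hⱼ)`. -/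
theorem stmt15 {Ω : Type*} [MeasurableSpace Ω] (P : Measure Ω) [IsProbabilityMeasure P]
    (n : ℕ) (E H : Fin n → Set Ω)
    (hE : ∀ i, MeasurableSet (E i)) (hH : ∀ i, MeasurableSet (H i))
    (hHpos : ∀ i, 0 < P (H i))
    (C : Finset (Fin n) → Ω → ℝ) (x : Finset (Fin n) → ℝ)
    (hsys : ConjunctionSystem P E H C x) :
    ∀ S : Finset (Fin n), S.Nonempty → ∀ j : Fin n, j ∉ S →
      max (x S + x {j} - 1) 0 ≤ x (insert j S) ∧
        x (insert j S) ≤ min (x S) (x {j}) := by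
  exact Stmt15Aux.main hsys hE hH hHpos
end

section
/- The conjunction of n conditional events is pointwise dominated by their quasi conjunction: with the recursive definition of 𝒞ₙ below, define QC : Ω → ℝ by QC(ω) := 1 if ω ∈ ⋃ᵢ Hᵢ and ω ∉ Hᵢ∖Eᵢ for every i; QC(ω) := 0 if ω ∈ Hᵢ∖Eᵢ for some i; and QC(ω) := ν for ω ∈ ⋂ᵢ Hᵢᶜ, where ν := P(⋂ᵢ(Hᵢᶜ ∪ Eᵢ) ∩ ⋃ᵢHᵢ)/P(⋃ᵢHᵢ). Then 𝒞ₙ(ω) ≤ QC(ω) for every ω ∈ Ω. -/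
/-!
On `⋃_{i∈S} Hᵢ` the conjunction `𝒞_S` takes the value `0` where some `Eᵢ|Hᵢ` is false, and
otherwise the value `1` or a prevision `x_T` of a proper subfamily. By strong induction on `S`
all previsions lie in `[0, 1]`, so on `⋃_{i∈S} Hᵢ` we get `0 ≤ 𝒞_S ≤ 1_A`, where
`A = ⋂_{i∈S} (Hᵢᶜ ∪ Eᵢ)`. Integrating gives `x_S ≤ P(A ∩ ⋃_{i∈S} Hᵢ) / P(⋃_{i∈S} Hᵢ)`, which
for `S = {1,…,n}` is `ν`, the value of `QC` on `⋂ᵢ Hᵢᶜ`; on `⋃ᵢ Hᵢ` the claim reads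
`𝒞ₙ ≤ 1 = QC` or `𝒞ₙ = 0 = QC`.
-/

open MeasureTheory Set

namespace ConjunctionSystem

variable {Ω : Type*} [MeasurableSpace Ω] {P : Measure Ω} {n : ℕ} {E H : Fin n → Set Ω}
  {C : Finset (Fin n) → Ω → ℝ} {x : Finset (Fin n) → ℝ} {S : Finset (Fin n)} {ω : Ω}

theorem eq_one_or_eq_prevision (hsys : ConjunctionSystem P E H C x) (hS : S.Nonempty)
    (hω : ω ∈ ⋃ i ∈ S, H i) (htrue : ∀ i ∈ S, ω ∈ H i → ω ∈ E i) :
    C S ω = 1 ∨ ∃ T ⊂ S, T.Nonempty ∧ C S ω = x T := by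
  classical
  set T := S.filter (fun i => ω ∉ H i)
  have htrue' : ∀ i ∈ S, i ∉ T → ω ∈ E i ∩ H i := fun i hi hiT => by
    have hHi : ω ∈ H i := by
      by_contra h
      exact hiT (Finset.mem_filter.mpr ⟨hi, h⟩)
    exact ⟨htrue i hi hHi, hHi⟩
  rcases T.eq_empty_or_nonempty with hT | hT
  · exact .inl <| hsys.eq_one S hS ω fun i hi => htrue' i hi (by simp [hT])
  · obtain ⟨j, hjS, hjH⟩ : ∃ j ∈ S, ω ∈ H j := by simpa using hω
    have hTS : T ⊂ S := Finset.filter_ssubset.mpr ⟨j, hjS, not_not.mpr hjH⟩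
    exact .inr ⟨T, hTS, hT, hsys.eq_part S hS ω T hTS.subset hT hTS.ne
      (fun i hi => by simp [T, hi]) htrue'⟩

theorem apply_mem_Icc (hsys : ConjunctionSystem P E H C x) (hS : S.Nonempty)
    (hsub : ∀ T ⊂ S, T.Nonempty → x T ∈ Icc 0 1) (hω : ω ∈ ⋃ i ∈ S, H i) :
    C S ω ∈ Icc 0 1 := by
  by_cases hfalse : ∃ i ∈ S, ω ∈ H i ∧ ω ∉ E i
  · rw [hsys.eq_zero S hS ω hfalse]
    exact ⟨le_rfl, zero_le_one⟩
  · push Not at hfalse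
    rcases hsys.eq_one_or_eq_prevision hS hω hfalse with h | ⟨T, hTS, hT, h⟩
    · rw [h]
      exact ⟨zero_le_one, le_rfl⟩
    · rw [h]
      exact hsub T hTS hT

theorem apply_le_indicator (hsys : ConjunctionSystem P E H C x) (hS : S.Nonempty)
    (hsub : ∀ T ⊂ S, T.Nonempty → x T ∈ Icc 0 1) (hω : ω ∈ ⋃ i ∈ S, H i) :
    C S ω ≤ (⋂ i ∈ S, ((H i)ᶜ ∪ E i)).indicator 1 ω := by
  by_cases hA : ω ∈ ⋂ i ∈ S, ((H i)ᶜ ∪ E i)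
  · rw [indicator_of_mem hA]
    exact (hsys.apply_mem_Icc hS hsub hω).2
  · obtain ⟨i, hi, hHi, hEi⟩ : ∃ i ∈ S, ω ∈ H i ∧ ω ∉ E i := by
      simpa [or_iff_not_imp_left] using hA
    rw [indicator_of_notMem hA, hsys.eq_zero S hS ω ⟨i, hi, hHi, hEi⟩]

theorem prevision_nonneg (hsys : ConjunctionSystem P E H C x) (hH : ∀ i, MeasurableSet (H i))
    (hS : S.Nonempty) (hsub : ∀ T ⊂ S, T.Nonempty → x T ∈ Icc 0 1) : 0 ≤ x S := by
  rw [hsys.prevision S hS]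
  exact div_nonneg (setIntegral_nonneg (S.measurableSet_biUnion fun i _ => hH i)
    fun ω hω => (hsys.apply_mem_Icc hS hsub hω).1) ENNReal.toReal_nonneg

theorem prevision_le [IsFiniteMeasure P] (hsys : ConjunctionSystem P E H C x)
    (hE : ∀ i, MeasurableSet (E i)) (hH : ∀ i, MeasurableSet (H i)) (hS : S.Nonempty)
    (hsub : ∀ T ⊂ S, T.Nonempty → x T ∈ Icc 0 1) :
    x S ≤ P.real ((⋂ i ∈ S, ((H i)ᶜ ∪ E i)) ∩ ⋃ i ∈ S, H i) / P.real (⋃ i ∈ S, H i) := by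
  have hU : MeasurableSet (⋃ i ∈ S, H i) := S.measurableSet_biUnion fun i _ => hH i
  have hA : MeasurableSet (⋂ i ∈ S, ((H i)ᶜ ∪ E i)) :=
    S.measurableSet_biInter fun i _ => (hH i).compl.union (hE i)
  have hint : ∫ ω in ⋃ i ∈ S, H i, C S ω ∂P
      ≤ ∫ ω in ⋃ i ∈ S, H i, (⋂ i ∈ S, ((H i)ᶜ ∪ E i)).indicator 1 ω ∂P :=
    integral_mono_of_nonneg
      (ae_restrict_of_forall_mem hU fun ω hω => (hsys.apply_mem_Icc hS hsub hω).1)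
      ((integrable_const 1).indicator hA)
      (ae_restrict_of_forall_mem hU fun ω hω => hsys.apply_le_indicator hS hsub hω)
  rw [integral_indicator_one hA, measureReal_restrict_apply hA] at hint
  rw [hsys.prevision S hS, ← measureReal_def]
  exact div_le_div_of_nonneg_right hint measureReal_nonneg

theorem prevision_mem_Icc [IsFiniteMeasure P] (hsys : ConjunctionSystem P E H C x)
    (hE : ∀ i, MeasurableSet (E i)) (hH : ∀ i, MeasurableSet (H i)) (S : Finset (Fin n))
    (hS : S.Nonempty) : x S ∈ Icc 0 1 := by
  induction S using Finset.strongInduction with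
  | H S ih =>
    refine ⟨hsys.prevision_nonneg hH hS ih, (hsys.prevision_le hE hH hS ih).trans ?_⟩
    exact div_le_one_of_le₀ (measureReal_mono inter_subset_right (measure_ne_top P _))
      measureReal_nonneg

end ConjunctionSystem

theorem stmt16_general {Ω : Type*} [MeasurableSpace Ω] (P : Measure Ω) [IsProbabilityMeasure P]
    (n : ℕ) (hn : 1 ≤ n) (E H : Fin n → Set Ω)
    (hE : ∀ i, MeasurableSet (E i)) (hH : ∀ i, MeasurableSet (H i))
    (C : Finset (Fin n) → Ω → ℝ) (x : Finset (Fin n) → ℝ)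
    (hsys : ConjunctionSystem P E H C x)
    (QC : Ω → ℝ)
    (hQC1 : ∀ ω : Ω, ω ∈ ⋃ i, H i → (∀ i, ω ∈ H i → ω ∈ E i) → QC ω = 1)
    (hQC0 : ∀ ω : Ω, (∃ i, ω ∈ H i ∧ ω ∉ E i) → QC ω = 0)
    (hQCν : ∀ ω : Ω, (∀ i, ω ∉ H i) →
      QC ω = (P ((⋂ i, ((H i)ᶜ ∪ E i)) ∩ ⋃ i, H i)).toReal / (P (⋃ i, H i)).toReal) :
    ∀ ω : Ω, C Finset.univ ω ≤ QC ω := by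
  intro ω
  have huniv : (Finset.univ : Finset (Fin n)).Nonempty := ⟨⟨0, hn⟩, Finset.mem_univ _⟩
  have hsub : ∀ T ⊂ Finset.univ, T.Nonempty → x T ∈ Icc 0 1 :=
    fun T _ hT => hsys.prevision_mem_Icc hE hH T hT
  by_cases hfalse : ∃ i, ω ∈ H i ∧ ω ∉ E i
  · obtain ⟨i, hi⟩ := hfalse
    rw [hsys.eq_zero _ huniv ω ⟨i, Finset.mem_univ i, hi⟩, hQC0 ω ⟨i, hi⟩]
  push Not at hfalse
  by_cases hω : ω ∈ ⋃ i, H i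
  · rw [hQC1 ω hω hfalse]
    exact (hsys.apply_mem_Icc huniv hsub (by simpa using hω)).2
  · have hoff : ∀ i, ω ∉ H i := by simpa using hω
    rw [hsys.eq_off _ huniv ω fun i _ => hoff i, hQCν ω hoff]
    simpa [measureReal_def] using hsys.prevision_le hE hH huniv hsub

/-- The conjunction `𝒞ₙ = 𝒞_{{1,…,n}}` of `n` conditional events is
pointwise dominated by their quasi conjunction `QC`, the function equal to `1` on
`⋃ᵢHᵢ ∖ ⋃ᵢ(Hᵢ∖Eᵢ)`, to `0` on `⋃ᵢ(Hᵢ∖Eᵢ)`, and to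
`ν := P(⋂ᵢ(Hᵢᶜ ∪ Eᵢ) ∩ ⋃ᵢHᵢ)/P(⋃ᵢHᵢ)` on `⋂ᵢHᵢᶜ`:
for every `ω ∈ Ω`, `𝒞ₙ(ω) ≤ QC(ω)`. -/
theorem stmt16 {Ω : Type*} [MeasurableSpace Ω] (P : Measure Ω) [IsProbabilityMeasure P]
    (n : ℕ) (hn : 1 ≤ n) (E H : Fin n → Set Ω)
    (hE : ∀ i, MeasurableSet (E i)) (hH : ∀ i, MeasurableSet (H i))
    (hHpos : ∀ i, 0 < P (H i))
    (C : Finset (Fin n) → Ω → ℝ) (x : Finset (Fin n) → ℝ)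
    (hsys : ConjunctionSystem P E H C x)
    (QC : Ω → ℝ)
    (hQC1 : ∀ ω : Ω, ω ∈ ⋃ i, H i → (∀ i, ω ∈ H i → ω ∈ E i) → QC ω = 1)
    (hQC0 : ∀ ω : Ω, (∃ i, ω ∈ H i ∧ ω ∉ E i) → QC ω = 0)
    (hQCν : ∀ ω : Ω, (∀ i, ω ∉ H i) →
      QC ω = (P ((⋂ i, ((H i)ᶜ ∪ E i)) ∩ ⋃ i, H i)).toReal / (P (⋃ i, H i)).toReal) :
    ∀ ω : Ω, C Finset.univ ω ≤ QC ω :=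
  stmt16_general P n hn E H hE hH C x hsys QC hQC1 hQC0 hQCν
end
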